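/- arXiv:1304.5056 — 7 statements merged into one kernel-verified Lean document; each statement's English description precedes it below -/
import Mathlib

section
/- Let n ≥ 1 and let (j_1,…,j_n), (i_1,…,i_n) ∈ 𝒜_n be such that the multisets {j_1,…,j_n} and {i_1,…,i_n} are different. If ∫ g_{j_1}⋯g_{j_n} · conj(g_{i_1}⋯g_{i_n}) dp ≠ 0, then there exist 1 ≤ l, m ≤ n with l ≠ m such that either i_l = −i_m or j_l = −j_m. -/
/-!
If neither `j` nor `i` contains two opposite entries, then, the multisets being different, there
is `v > 0` at which the exponents `A = #{j = v} + #{i = -v}` of `g_v` and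
`B = #{j = -v} + #{i = v}` of `conj g_v` in the integrand differ. The integrand factors as
`g_v ^ A * conj g_v ^ B` times a function of the `h_m, l_m` with `m ≠ v`, so by independence
the integral is the product of the two expectations. The law of `g_v` is a scaled standard
Gaussian on `ℂ ≅ ℝ²`, hence invariant under every rotation `z ↦ u z`, which multiplies the
first expectation by `u ^ A * conj u ^ B`; choosing `u` with this factor `≠ 1` shows it vanishes.
-/

open MeasureTheory ProbabilityTheory

/-- The family `(g_n)_{n ∈ ℤ \ {0}}` of centered complex Gaussian random
variables from the paper: `g_n = c (h_n + i l_n)` for `n > 0`, where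
`(h_n)_{n>0}` and `(l_n)_{n>0}` are mutually independent standard real
Gaussians `N(0,1)`, and `g_{-n} = conj (g_n)` for `n > 0`. -/
structure GaussianData (Ω : Type*) [MeasurableSpace Ω] (p : Measure Ω) where
  c : ℝ
  c_pos : 0 < c
  h : ℤ → Ω → ℝ
  l : ℤ → Ω → ℝ
  g : ℤ → Ω → ℂ
  g_def : ∀ n : ℤ, 0 < n → ∀ ω, g n ω = (c : ℂ) * ((h n ω : ℂ) + Complex.I * (l n ω : ℂ))
  g_neg : ∀ n : ℤ, 0 < n → ∀ ω, g (-n) ω = starRingEnd ℂ (g n ω)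
  h_meas : ∀ n : ℤ, 0 < n → Measurable (h n)
  l_meas : ∀ n : ℤ, 0 < n → Measurable (l n)
  h_law : ∀ n : ℤ, 0 < n → p.map (h n) = gaussianReal 0 1
  l_law : ∀ n : ℤ, 0 < n → p.map (l n) = gaussianReal 0 1
  indep : iIndepFun (m := fun _ => (inferInstance : MeasurableSpace ℝ))
      (fun nb : {n : ℤ // 0 < n} × Bool => if nb.2 then l nb.1.1 else h nb.1.1) p

open ComplexConjugate

theorem Multiset.prod_map_eq_pow_count_mul_pow_count_mul {α M : Type*} [DecidableEq α]
    [CommMonoid M] (s : Multiset α) (f : α → M) {a b : α} (hab : a ≠ b) :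
    (s.map f).prod = f a ^ s.count a * f b ^ s.count b *
      ((s.filter fun x => x ≠ a ∧ x ≠ b).map f).prod := by
  induction s using Multiset.induction_on with
  | empty => simp
  | cons x s ih =>
    by_cases hxa : x = a
    · subst hxa
      simp [Multiset.count_cons_of_ne hab.symm, ih, pow_succ]
      ac_rfl
    by_cases hxb : x = b
    · subst hxb
      simp [Multiset.count_cons_of_ne hab, hxa, ih, pow_succ]
      ac_rfl
    · simp [Multiset.count_cons_of_ne (Ne.symm hxa), Multiset.count_cons_of_ne (Ne.symm hxb),
        hxa, hxb, ih]
      ac_rfl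

lemma Fin.prod_univ_comp_eq_prod_map_ofFn {α M : Type*} [CommMonoid M] {n : ℕ} (f : Fin n → α)
    (φ : α → M) : ∏ k, φ (f k) = ((List.ofFn f : Multiset α).map φ).prod := by
  rw [Multiset.map_coe, Multiset.prod_coe, List.map_ofFn, List.prod_ofFn]
  rfl

theorem exists_pos_count_add_ne_of_ne {M N : Multiset ℤ} (hne : M ≠ N) (hM0 : 0 ∉ M)
    (hN0 : 0 ∉ N) (hM : ∀ v ∈ M, -v ∉ M) (hN : ∀ v ∈ N, -v ∉ N) :
    ∃ v > 0, M.count v + N.count (-v) ≠ M.count (-v) + N.count v := by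
  obtain ⟨w, hw⟩ : ∃ w, M.count w ≠ N.count w := by
    by_contra! h
    exact hne (Multiset.ext.mpr h)
  have hw0 : w ≠ 0 := by
    rintro rfl
    simp [Multiset.count_eq_zero_of_notMem, hM0, hN0] at hw
  have hMw : M.count w = 0 ∨ M.count (-w) = 0 := by
    simpa [Multiset.count_eq_zero, or_iff_not_imp_left] using hM w
  have hNw : N.count w = 0 ∨ N.count (-w) = 0 := by
    simpa [Multiset.count_eq_zero, or_iff_not_imp_left] using hN w
  rcases hw0.lt_or_gt with hneg | hpos
  · exact ⟨-w, neg_pos.mpr hneg, by rw [neg_neg]; omega⟩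
  · exact ⟨w, hpos, by omega⟩

lemma zero_notMem_ofFn {n : ℕ} {f : Fin n → ℤ} (hf0 : ∀ k, f k ≠ 0) :
    0 ∉ (List.ofFn f : Multiset ℤ) := by
  simpa [List.mem_ofFn] using hf0

lemma neg_notMem_ofFn {n : ℕ} {f : Fin n → ℤ} (hf0 : ∀ k, f k ≠ 0)
    (hf : ∀ k k', k ≠ k' → f k ≠ -f k') :
    ∀ v ∈ (List.ofFn f : Multiset ℤ), -v ∉ (List.ofFn f : Multiset ℤ) := by
  simp only [Multiset.mem_coe, List.mem_ofFn]
  rintro _ ⟨k, rfl⟩ ⟨k', hk'⟩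
  by_cases hkk : k' = k
  · subst hkk
    exact hf0 k' (by omega)
  · exact hf k' k hkk hk'

theorem Circle.exists_pow_mul_conj_pow_ne_one {a b : ℕ} (hab : a ≠ b) :
    ∃ u : Circle, (u : ℂ) ^ a * conj (u : ℂ) ^ b ≠ 1 := by
  have hab' : (a : ℝ) - b ≠ 0 := sub_ne_zero.mpr (Nat.cast_injective.ne hab)
  refine ⟨Circle.exp (Real.pi / ((a : ℤ) - b : ℤ)), fun h => Circle.exp_pi_ne_one ?_⟩
  rw [← Circle.coe_inv_eq_conj, ← Circle.coe_pow, ← Circle.coe_pow, ← Circle.coe_mul,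
    Circle.coe_eq_one, ← zpow_natCast, ← zpow_natCast, inv_zpow', ← zpow_add,
    ← Circle.exp_intCast_mul] at h
  convert h using 2
  push_cast
  field_simp
  ring

theorem integral_pow_mul_conj_pow_eq_zero_of_map_rotation {μ : Measure ℂ}
    (hμ : ∀ u : Circle, μ.map (rotation u) = μ) {a b : ℕ} (hab : a ≠ b) :
    ∫ z, z ^ a * conj z ^ b ∂μ = 0 := by
  obtain ⟨u, hu⟩ := Circle.exists_pow_mul_conj_pow_ne_one hab
  have hrot : MeasurePreserving (rotation u) μ μ :=
    ⟨(rotation u).continuous.measurable, hμ u⟩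
  have hmul : ∀ z, (rotation u z) ^ a * conj (rotation u z) ^ b =
      ((u : ℂ) ^ a * conj (u : ℂ) ^ b) * (z ^ a * conj z ^ b) := fun z => by
    rw [rotation_apply, map_mul]; ring
  have key := hrot.integral_comp (rotation u).toHomeomorph.measurableEmbedding
    (fun z => z ^ a * conj z ^ b)
  simp only [hmul, integral_const_mul] at key
  by_contra hI
  exact hu ((mul_eq_right₀ hI).mp key)

theorem map_ofReal_add_I_mul_eq_stdGaussian {Ω : Type*} [MeasurableSpace Ω] {P : Measure Ω}
    [IsFiniteMeasure P] {X Y : Ω → ℝ} (hX : Measurable X) (hY : Measurable Y)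
    (hXY : IndepFun X Y P) (hXlaw : P.map X = gaussianReal 0 1)
    (hYlaw : P.map Y = gaussianReal 0 1) :
    P.map (fun ω => (X ω : ℂ) + Complex.I * Y ω) = stdGaussian ℂ := by
  have hpair := (indepFun_iff_map_prod_eq_prod_map_map hX.aemeasurable hY.aemeasurable).mp hXY
  rw [hXlaw, hYlaw] at hpair
  rw [stdGaussian_eq_map_pi_orthonormalBasis Complex.orthonormalBasisOneI,
    ← (measurePreserving_finTwoArrow (gaussianReal 0 1)).symm.map_eq, Measure.map_map
      (by fun_prop) (MeasurableEquiv.measurable _), ← hpair, Measure.map_map (by fun_prop)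
      (hX.prodMk hY)]
  congr 1
  funext ω
  simp [Fin.sum_univ_two, mul_comm]

namespace GaussianData

variable {Ω : Type*} [mΩ : MeasurableSpace Ω] {p : Measure Ω} (G : GaussianData Ω p)

def coord (q : {n : ℤ // 0 < n} × Bool) : Ω → ℝ := if q.2 then G.l q.1.1 else G.h q.1.1

lemma measurable_coord (q : {n : ℤ // 0 < n} × Bool) : Measurable (G.coord q) := by
  unfold coord
  split
  exacts [G.l_meas _ q.1.2, G.h_meas _ q.1.2]

/-- The σ-algebra generated by the `h n` and `l n` with `n ∈ S`. -/
abbrev modes (S : Set ℤ) : MeasurableSpace Ω :=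
  ⨆ (q) (_ : (q.1 : ℤ) ∈ S), MeasurableSpace.comap (G.coord q) inferInstance

lemma modes_le (S : Set ℤ) : G.modes S ≤ mΩ :=
  iSup₂_le fun q _ => (G.measurable_coord q).comap_le

lemma indep_modes {S T : Set ℤ} (hST : Disjoint S T) : Indep (G.modes S) (G.modes T) p :=
  indep_iSup_of_disjoint (fun q => (G.measurable_coord q).comap_le)
    ((iIndepFun_iff_iIndep _ _ _).mp G.indep)
    (hST.preimage fun q : {n : ℤ // 0 < n} × Bool => (q.1 : ℤ))

lemma indepFun_of_measurable_modes {E F : Type*} [MeasurableSpace E] [MeasurableSpace F]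
    {S T : Set ℤ} (hST : Disjoint S T) {X : Ω → E} {Y : Ω → F}
    (hX : Measurable[G.modes S] X) (hY : Measurable[G.modes T] Y) : IndepFun X Y p := by
  rw [IndepFun_iff_Indep]
  exact indep_of_indep_of_le_left (indep_of_indep_of_le_right (G.indep_modes hST)
    hY.comap_le) hX.comap_le

lemma measurable_g_modes_of_pos {S : Set ℤ} {n : ℤ} (hn : 0 < n) (hnS : n ∈ S) :
    Measurable[G.modes S] (G.g n) := by
  have hh : Measurable[G.modes S] (G.h n) :=
    measurable_iff_comap_le.mpr (le_iSup₂_of_le (⟨n, hn⟩, false) hnS le_rfl)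
  have hl : Measurable[G.modes S] (G.l n) :=
    measurable_iff_comap_le.mpr (le_iSup₂_of_le (⟨n, hn⟩, true) hnS le_rfl)
  rw [funext (G.g_def n hn)]
  exact measurable_const.mul ((Complex.measurable_ofReal.comp hh).add
    (measurable_const.mul (Complex.measurable_ofReal.comp hl)))

lemma measurable_g_modes {S : Set ℤ} {m : ℤ} (hm : m ≠ 0) (hmS : |m| ∈ S) :
    Measurable[G.modes S] (G.g m) := by
  rcases hm.lt_or_gt with hneg | hpos
  · rw [abs_of_neg hneg] at hmS
    have : G.g m = fun ω => conj (G.g (-m) ω) := by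
      funext ω
      rw [← G.g_neg _ (neg_pos.mpr hneg), neg_neg]
    rw [this]
    exact Complex.continuous_conj.measurable.comp
      (G.measurable_g_modes_of_pos (neg_pos.mpr hneg) hmS)
  · exact G.measurable_g_modes_of_pos hpos (abs_of_pos hpos ▸ hmS)

lemma measurable_g {n : ℤ} (hn : 0 < n) : Measurable (G.g n) :=
  (G.measurable_g_modes_of_pos hn (Set.mem_univ n)).mono (G.modes_le _) le_rfl

lemma indepFun_h_l {n : ℤ} (hn : 0 < n) : IndepFun (G.h n) (G.l n) p :=
  G.indep.indepFun (i := (⟨n, hn⟩, false)) (j := (⟨n, hn⟩, true)) (by simp)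

lemma prod_map_g_mul_conj_prod_map_g_eq {v : ℤ} (hv : 0 < v) (M N : Multiset ℤ) (ω : Ω) :
    (M.map (G.g · ω)).prod * conj (N.map (G.g · ω)).prod =
      G.g v ω ^ (M.count v + N.count (-v)) * conj (G.g v ω) ^ (M.count (-v) + N.count v) *
        (((M.filter fun m => m ≠ v ∧ m ≠ -v).map (G.g · ω)).prod *
          conj ((N.filter fun m => m ≠ v ∧ m ≠ -v).map (G.g · ω)).prod) := by
  have hv' : v ≠ -v := by omega
  rw [Multiset.prod_map_eq_pow_count_mul_pow_count_mul M _ hv',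
    Multiset.prod_map_eq_pow_count_mul_pow_count_mul N _ hv', G.g_neg v hv ω]
  simp only [map_mul, map_pow, Complex.conj_conj, pow_add]
  ring

lemma measurable_prod_map_g_modes {S : Set ℤ} {s : Multiset ℤ}
    (hs : ∀ m ∈ s, m ≠ 0 ∧ |m| ∈ S) :
    Measurable[G.modes S] fun ω => (s.map (G.g · ω)).prod := by
  have := (s.map G.g).measurable_fun_prod
    (by simpa using fun m hm => G.measurable_g_modes (hs m hm).1 (hs m hm).2)
  simpa [Multiset.map_map] using this

variable [IsFiniteMeasure p]

lemma map_g_eq_map_stdGaussian {n : ℤ} (hn : 0 < n) :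
    p.map (G.g n) = (stdGaussian ℂ).map fun z => (G.c : ℂ) * z := by
  rw [← map_ofReal_add_I_mul_eq_stdGaussian (G.h_meas n hn) (G.l_meas n hn) (G.indepFun_h_l hn)
    (G.h_law n hn) (G.l_law n hn), Measure.map_map (by fun_prop)
    (by have := G.h_meas n hn; have := G.l_meas n hn; fun_prop)]
  exact congrArg (Measure.map · p) (funext (G.g_def n hn))

lemma map_rotation_map_g {n : ℤ} (hn : 0 < n) (u : Circle) :
    (p.map (G.g n)).map (rotation u) = p.map (G.g n) := by
  have hcomm :
      rotation u ∘ (fun z => (G.c : ℂ) * z) = (fun z => (G.c : ℂ) * z) ∘ rotation u := by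
    funext z
    simp only [Function.comp_apply, rotation_apply]
    ring
  rw [G.map_g_eq_map_stdGaussian hn, Measure.map_map (by fun_prop) (by fun_prop), hcomm,
    ← Measure.map_map (by fun_prop) (by fun_prop), stdGaussian_map]

theorem integral_g_pow_mul_conj_pow_eq_zero {n : ℤ} (hn : 0 < n) {a b : ℕ} (hab : a ≠ b) :
    ∫ ω, G.g n ω ^ a * conj (G.g n ω) ^ b ∂p = 0 := by
  rw [← integral_map (G.measurable_g hn).aemeasurable (by fun_prop : Continuous
    fun z : ℂ => z ^ a * conj z ^ b).aestronglyMeasurable]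
  exact integral_pow_mul_conj_pow_eq_zero_of_map_rotation (G.map_rotation_map_g hn) hab

theorem integral_prod_map_g_mul_conj_eq_zero {M N : Multiset ℤ} (hM : 0 ∉ M) (hN : 0 ∉ N)
    {v : ℤ} (hv : 0 < v) (hAB : M.count v + N.count (-v) ≠ M.count (-v) + N.count v) :
    ∫ ω, (M.map (G.g · ω)).prod * conj (N.map (G.g · ω)).prod ∂p = 0 := by
  have hrest : ∀ s : Multiset ℤ, 0 ∉ s → Measurable[G.modes {v}ᶜ]
      fun ω => ((s.filter fun m => m ≠ v ∧ m ≠ -v).map (G.g · ω)).prod := fun s hs =>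
    G.measurable_prod_map_g_modes fun m hm => by
      obtain ⟨hms, hmv, hmnv⟩ : m ∈ s ∧ m ≠ v ∧ m ≠ -v := by simpa using hm
      refine ⟨ne_of_mem_of_not_mem hms hs, ?_⟩
      simp only [Set.mem_compl_iff, Set.mem_singleton_iff]
      cases abs_choice m <;> omega
  have hg := G.measurable_g_modes_of_pos hv (Set.mem_singleton v)
  have hX : Measurable[G.modes {v}] fun ω =>
      G.g v ω ^ (M.count v + N.count (-v)) * conj (G.g v ω) ^ (M.count (-v) + N.count v) :=
    (hg.pow_const _).mul ((Complex.continuous_conj.measurable.comp hg).pow_const _)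
  have hY : Measurable[G.modes {v}ᶜ] fun ω =>
      ((M.filter fun m => m ≠ v ∧ m ≠ -v).map (G.g · ω)).prod *
        conj ((N.filter fun m => m ≠ v ∧ m ≠ -v).map (G.g · ω)).prod :=
    (hrest M hM).mul (Complex.continuous_conj.measurable.comp (hrest N hN))
  rw [integral_congr_ae (ae_of_all _ (G.prod_map_g_mul_conj_prod_map_g_eq hv M N)),
    (G.indepFun_of_measurable_modes disjoint_compl_right hX hY).integral_fun_mul_eq_mul_integral
      (hX.mono (G.modes_le _) le_rfl).aestronglyMeasurable
      (hY.mono (G.modes_le _) le_rfl).aestronglyMeasurable,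
    G.integral_g_pow_mul_conj_pow_eq_zero hv hAB, zero_mul]

end GaussianData

theorem nonvanishing_moment_implies_pair_general
    {Ω : Type*} [MeasurableSpace Ω] (p : Measure Ω) [IsProbabilityMeasure p]
    (G : GaussianData Ω p)
    (n : ℕ)
    (j i : Fin n → ℤ)
    (hj0 : ∀ k, j k ≠ 0) (hi0 : ∀ k, i k ≠ 0)
    (hne : (List.ofFn j : Multiset ℤ) ≠ (List.ofFn i : Multiset ℤ))
    (hint : ∫ ω, (∏ k, G.g (j k) ω) * starRingEnd ℂ (∏ k, G.g (i k) ω) ∂p ≠ 0) :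
    ∃ l m : Fin n, l ≠ m ∧ (i l = -(i m) ∨ j l = -(j m)) := by
  by_contra! hpair
  obtain ⟨v, hv, hAB⟩ := exists_pos_count_add_ne_of_ne hne (zero_notMem_ofFn hj0)
    (zero_notMem_ofFn hi0) (neg_notMem_ofFn hj0 fun l m h => (hpair l m h).2)
    (neg_notMem_ofFn hi0 fun l m h => (hpair l m h).1)
  refine hint ((integral_congr_ae (ae_of_all _ fun ω => ?_)).trans
    (G.integral_prod_map_g_mul_conj_eq_zero (zero_notMem_ofFn hj0) (zero_notMem_ofFn hi0) hv hAB))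
  rw [Fin.prod_univ_comp_eq_prod_map_ofFn j (G.g · ω),
    Fin.prod_univ_comp_eq_prod_map_ofFn i (G.g · ω)]

/-- If `(j_1,…,j_n), (i_1,…,i_n) ∈ 𝒜_n` determine different
multisets and `∫ g_{j_1}⋯g_{j_n} conj(g_{i_1}⋯g_{i_n}) dp ≠ 0`, then some pair
of distinct indices `l ≠ m` satisfies `i_l = -i_m` or `j_l = -j_m`. -/
theorem nonvanishing_moment_implies_pair
    {Ω : Type*} [MeasurableSpace Ω] (p : Measure Ω) [IsProbabilityMeasure p]
    (G : GaussianData Ω p)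
    (n : ℕ) (hn : 1 ≤ n)
    (j i : Fin n → ℤ)
    (hj0 : ∀ k, j k ≠ 0) (hi0 : ∀ k, i k ≠ 0)
    (hjsum : ∑ k, j k = 0) (hisum : ∑ k, i k = 0)
    (hne : (List.ofFn j : Multiset ℤ) ≠ (List.ofFn i : Multiset ℤ))
    (hint : ∫ ω, (∏ k, G.g (j k) ω) * starRingEnd ℂ (∏ k, G.g (i k) ω) ∂p ≠ 0) :
    ∃ l m : Fin n, l ≠ m ∧ (i l = -(i m) ∨ j l = -(j m)) :=
  nonvanishing_moment_implies_pair_general p G n j i hj0 hi0 hne hint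
end

section
/- Let i, j > 0 be fixed and assume (j_1,…,j_5) ∈ 𝒜̃_5^{c,j} and (i_1,…,i_5) ∈ 𝒜̃_5^{c,i}, and that the multiset {j_1,…,j_5} with one copy of j and one copy of −j removed is different from the multiset {i_1,…,i_5} with one copy of i and one copy of −i removed. Then ∫ g_{j_1}g_{j_2}g_{j_3}g_{j_4}g_{j_5} · conj(g_{i_1}g_{i_2}g_{i_3}g_{i_4}g_{i_5}) dp = 0. -/
open MeasureTheory ProbabilityTheory

/-!
Write `g_m = c (h_{|m|} ± i l_{|m|})`. For `N > 0` the rotation `(h_N, l_N) ↦ (-l_N, h_N)`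
preserves the joint law of the independent family `(h, l)` and multiplies `g_N` by `i` and
`g_{-N}` by `-i`, so it multiplies the integrand by `i ^ q`, where `q` is the charge
`#N - #(-N)` of `(j_k)` minus that of `(i_k)`. Hence the moment vanishes once `4 ∤ q`.

Removing `±j` and `±i` leaves two different triples of nonzero integers with sum zero, and
the charges are unchanged. Such a triple never contains both `n` and `-n`, so it is determined
by its charges, which lie in `[-2, 2]`. If the charges of the two triples differed by a
multiple of `4` everywhere, a difference `±4` at `n` would force the triples
`{n, n, -2n}` and `{-n, -n, 2n}`, whose charges at `2n` differ by `2`; so they would agree.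
-/

open Complex

theorem integral_eq_zero_of_map_eq_of_comp_eq_smul {α E 𝕜 : Type*} [MeasurableSpace α]
    [NormedAddCommGroup E] [NormedSpace ℝ E] [NontriviallyNormedField 𝕜] [NormedSpace 𝕜 E]
    [SMulCommClass ℝ 𝕜 E] {μ : Measure α} {T : α → α} (hT : Measurable T)
    (hμ : μ.map T = μ) {F : α → E} (hF : AEStronglyMeasurable F μ) {a : 𝕜} (ha : a ≠ 1)
    (hFT : ∀ x, F (T x) = a • F x) : ∫ x, F x ∂μ = 0 := by
  have h : ∫ x, F x ∂μ = a • ∫ x, F x ∂μ := calc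
    ∫ x, F x ∂μ = ∫ x, F x ∂(μ.map T) := by rw [hμ]
    _ = ∫ x, F (T x) ∂μ := integral_map hT.aemeasurable (hμ.symm ▸ hF)
    _ = a • ∫ x, F x ∂μ := by simp_rw [hFT, integral_smul]
  have h' : (a - 1) • ∫ x, F x ∂μ = 0 := by rw [sub_smul, one_smul, ← h, sub_self]
  exact (smul_eq_zero.mp h').resolve_left (sub_ne_zero.mpr ha)

theorem ProbabilityTheory.iIndepFun.map_eq_map_perm_comp {ι Ω 𝓧 : Type*} [MeasurableSpace Ω]
    [MeasurableSpace 𝓧] {P : Measure Ω} {X : ι → Ω → 𝓧} (hX : iIndepFun X P)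
    (mX : ∀ i, Measurable (X i)) {μ : Measure 𝓧} (hlaw : ∀ i, P.map (X i) = μ)
    (σ : Equiv.Perm ι) {φ : ι → 𝓧 → 𝓧} (hφ : ∀ i, Measurable (φ i))
    (hφμ : ∀ i, μ.map (φ i) = μ) :
    P.map (fun ω i => φ i (X (σ i) ω)) = P.map (fun ω i => X i ω) := by
  have hY : iIndepFun (fun i => φ i ∘ X (σ i)) P := (hX.precomp σ.injective).comp φ hφ
  change P.map (fun ω i => (φ i ∘ X (σ i)) ω) = _
  rw [hY.map_fun_eq_infinitePi_map fun i => (hφ i).comp (mX (σ i)),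
    hX.map_fun_eq_infinitePi_map mX]
  congr 1
  funext i
  rw [← Measure.map_map (hφ i) (mX (σ i)), hlaw, hφμ, hlaw]

namespace Multiset

def charge (s : Multiset ℤ) (n : ℤ) : ℤ := (s.count n : ℤ) - s.count (-n)

lemma charge_cons (a : ℤ) (s : Multiset ℤ) (n : ℤ) :
    (a ::ₘ s).charge n = s.charge n + ((if n = a then 1 else 0) - (if -n = a then 1 else 0)) := by
  simp only [charge, count_cons]
  push_cast
  ring

lemma charge_cons_cons_neg (v : ℤ) (s : Multiset ℤ) (n : ℤ) :
    (v ::ₘ -v ::ₘ s).charge n = s.charge n := by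
  simp only [charge_cons]
  split_ifs <;> omega

lemma charge_neg (s : Multiset ℤ) (n : ℤ) : s.charge (-n) = -s.charge n := by
  simp only [charge, neg_neg]
  ring

lemma count_eq_toNat_charge {s : Multiset ℤ} (hs : ∀ n ∈ s, -n ∉ s) (n : ℤ) :
    s.count n = (s.charge n).toNat := by
  by_cases hn : n ∈ s
  · simp [charge, count_eq_zero_of_notMem (hs n hn)]
  · have := count_eq_zero_of_notMem hn
    simp only [charge, this]
    omega

lemma eq_of_charge_eq {s t : Multiset ℤ} (hs : ∀ n ∈ s, -n ∉ s) (ht : ∀ n ∈ t, -n ∉ t)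
    (h : ∀ n, s.charge n = t.charge n) : s = t :=
  ext.mpr fun n => by rw [count_eq_toNat_charge hs, count_eq_toNat_charge ht, h]

structure IsZeroSumTriple (A : Multiset ℤ) : Prop where
  card_eq : card A = 3
  sum_eq_zero : A.sum = 0
  zero_notMem : (0 : ℤ) ∉ A

namespace IsZeroSumTriple

variable {A : Multiset ℤ}

lemma neg_notMem (hA : A.IsZeroSumTriple) (n : ℤ) (hn : n ∈ A) : -n ∉ A := by
  intro hn'
  have hn0 : n ≠ 0 := fun h => hA.zero_notMem (h ▸ hn)
  obtain ⟨A₁, rfl⟩ := exists_cons_of_mem hn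
  obtain ⟨A₂, rfl⟩ := exists_cons_of_mem ((mem_cons.mp hn').resolve_left (by omega))
  obtain ⟨z, rfl⟩ := card_eq_one.mp (by simpa using hA.card_eq)
  have hz : z = 0 := by simpa using hA.sum_eq_zero
  exact hA.zero_notMem (by simp [hz])

lemma eq_of_count_eq_two (hA : A.IsZeroSumTriple) {n : ℤ} (h : A.count n = 2) :
    A = n ::ₘ n ::ₘ {-(2 * n)} := by
  obtain ⟨C, rfl⟩ := exists_add_of_le (le_count_iff_replicate_le.mp h.ge)
  obtain ⟨z, rfl⟩ := card_eq_one.mp (by simpa using hA.card_eq)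
  have hz : z = -(2 * n) := by
    have := hA.sum_eq_zero
    simp at this
    omega
  simp [hz, replicate_succ]

lemma count_le_two (hA : A.IsZeroSumTriple) (n : ℤ) : A.count n ≤ 2 := by
  by_contra! h
  have hrep : A = replicate 3 n :=
    (eq_of_le_of_card_le (le_count_iff_replicate_le.mp (by omega)) (by simp [hA.card_eq])).symm
  have hn : n ≠ 0 := by rintro rfl; exact hA.zero_notMem (by simp [hrep])
  have := hA.sum_eq_zero
  simp [hrep] at this
  omega

lemma abs_charge_le_two (hA : A.IsZeroSumTriple) (n : ℤ) : |A.charge n| ≤ 2 := by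
  have := hA.count_le_two n
  have := hA.count_le_two (-n)
  rw [charge, abs_le]
  omega

end IsZeroSumTriple

lemma charge_singleton (a n : ℤ) :
    ({a} : Multiset ℤ).charge n = (if n = a then 1 else 0) - (if -n = a then 1 else 0) := by
  simp only [charge, count_singleton]
  push_cast
  rfl

lemma not_four_dvd_charge_sub_two_mul {A B : Multiset ℤ} (hA : A.IsZeroSumTriple)
    (hB : B.IsZeroSumTriple) {n : ℤ} (h : A.charge n - B.charge n = 4) :
    ¬ (4 : ℤ) ∣ A.charge (2 * n) - B.charge (2 * n) := by
  have hAn := abs_le.mp (hA.abs_charge_le_two n)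
  have hBn := abs_le.mp (hB.abs_charge_le_two n)
  have hA2 := hA.count_le_two n
  have hB2 := hB.count_le_two (-n)
  have hn : n ≠ 0 := by rintro rfl; simp [charge] at h
  rw [hA.eq_of_count_eq_two (n := n) (by simp only [charge] at *; omega),
    hB.eq_of_count_eq_two (n := -n) (by simp only [charge] at *; omega)]
  simp only [charge_cons, charge_singleton]
  split_ifs <;> omega

theorem exists_pos_not_four_dvd_charge_sub {A B : Multiset ℤ} (hA : A.IsZeroSumTriple)
    (hB : B.IsZeroSumTriple) (hne : A ≠ B) :
    ∃ N, 0 < N ∧ ¬ (4 : ℤ) ∣ A.charge N - B.charge N := by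
  by_contra! hdvd
  have hall : ∀ n, (4 : ℤ) ∣ A.charge n - B.charge n := by
    intro n
    rcases lt_trichotomy n 0 with h | rfl | h
    · have := hdvd (-n) (by omega)
      rw [charge_neg, charge_neg] at this
      omega
    · simp [charge]
    · exact hdvd n h
  have hbound : ∀ n, |A.charge n - B.charge n| ≤ 4 := fun n =>
    (abs_sub _ _).trans (by linarith [hA.abs_charge_le_two n, hB.abs_charge_le_two n])
  have hne4 : ∀ n, A.charge n - B.charge n ≠ 4 := fun n h =>
    not_four_dvd_charge_sub_two_mul hA hB h (hall (2 * n))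
  refine hne (eq_of_charge_eq hA.neg_notMem hB.neg_notMem fun n => ?_)
  have h₁ := hne4 (-n)
  rw [charge_neg, charge_neg] at h₁
  have := hall n
  have := abs_le.mp (hbound n)
  have := hne4 n
  omega

lemma eq_cons_cons_neg_erase_erase {s : Multiset ℤ} {v : ℤ} (hv0 : v ≠ 0) (hv : v ∈ s)
    (hnv : -v ∈ s) : s = v ::ₘ -v ::ₘ (s.erase v).erase (-v) := by
  rw [cons_erase ((mem_erase_of_ne (by omega)).mpr hnv), cons_erase hv]

lemma charge_erase_erase_neg {s : Multiset ℤ} {v : ℤ} (hv0 : v ≠ 0) (hv : v ∈ s)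
    (hnv : -v ∈ s) (n : ℤ) : ((s.erase v).erase (-v)).charge n = s.charge n := by
  conv_rhs => rw [eq_cons_cons_neg_erase_erase hv0 hv hnv]
  exact (charge_cons_cons_neg _ _ _).symm

lemma IsZeroSumTriple.erase_erase_neg {s : Multiset ℤ} (hcard : card s = 5) (hsum : s.sum = 0)
    (h0 : (0 : ℤ) ∉ s) {v : ℤ} (hv : v ∈ s) (hnv : -v ∈ s) :
    ((s.erase v).erase (-v)).IsZeroSumTriple := by
  have hv0 : v ≠ 0 := by rintro rfl; exact h0 hv
  rw [eq_cons_cons_neg_erase_erase hv0 hv hnv] at hcard hsum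
  exact ⟨by simp at hcard; omega, by simpa using hsum,
    fun h => h0 (mem_of_mem_erase (mem_of_mem_erase h))⟩

lemma isZeroSumTriple_erase_erase_ofFn {t : Fin 5 → ℤ} (ht0 : ∀ k, t k ≠ 0)
    (hsum : ∑ k, t k = 0) {v : ℤ} (hv : ∃ l, t l = v) (hnv : ∃ m, t m = -v) :
    (((List.ofFn t : Multiset ℤ).erase v).erase (-v)).IsZeroSumTriple ∧
      ∀ n, (((List.ofFn t : Multiset ℤ).erase v).erase (-v)).charge n =
        (List.ofFn t : Multiset ℤ).charge n := by
  have hv' := mem_coe.mpr (List.mem_ofFn.mpr hv)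
  have hnv' := mem_coe.mpr (List.mem_ofFn.mpr hnv)
  have h0 : (0 : ℤ) ∉ (List.ofFn t : Multiset ℤ) := fun h => by
    obtain ⟨k, hk⟩ := List.mem_ofFn.mp (mem_coe.mp h)
    exact ht0 k hk
  have hv0 : v ≠ 0 := by rintro rfl; exact h0 hv'
  exact ⟨IsZeroSumTriple.erase_erase_neg (by simp) (by rw [sum_coe, List.sum_ofFn, hsum]) h0
    hv' hnv', charge_erase_erase_neg hv0 hv' hnv'⟩

end Multiset

open Multiset in
theorem exists_pos_not_four_dvd_charge_ofFn_sub {jt it : Fin 5 → ℤ} {jv iv : ℤ}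
    (hjt0 : ∀ k, jt k ≠ 0) (hit0 : ∀ k, it k ≠ 0)
    (hjtsum : ∑ k, jt k = 0) (hitsum : ∑ k, it k = 0)
    (hjtmem : ∃ l m : Fin 5, l ≠ m ∧ jt l = jv ∧ jt m = -jv)
    (hitmem : ∃ l m : Fin 5, l ≠ m ∧ it l = iv ∧ it m = -iv)
    (hne : ((List.ofFn jt : Multiset ℤ).erase jv).erase (-jv) ≠
        ((List.ofFn it : Multiset ℤ).erase iv).erase (-iv)) :
    ∃ N, 0 < N ∧ ¬ (4 : ℤ) ∣
      (List.ofFn jt : Multiset ℤ).charge N - (List.ofFn it : Multiset ℤ).charge N := by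
  obtain ⟨lj, mj, -, hlj, hmj⟩ := hjtmem
  obtain ⟨li, mi, -, hli, hmi⟩ := hitmem
  obtain ⟨hA, hchA⟩ := isZeroSumTriple_erase_erase_ofFn hjt0 hjtsum ⟨lj, hlj⟩ ⟨mj, hmj⟩
  obtain ⟨hB, hchB⟩ := isZeroSumTriple_erase_erase_ofFn hit0 hitsum ⟨li, hli⟩ ⟨mi, hmi⟩
  obtain ⟨N, hN, h⟩ := exists_pos_not_four_dvd_charge_sub hA hB hne
  exact ⟨N, hN, by rwa [← hchA, ← hchB]⟩

abbrev GaussIndex : Type := {n : ℤ // 0 < n} × Bool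

/-- `g_m` as a function of the coordinates `v (n, false) = h_n` and `v (n, true) = l_n`. -/
def gaussOf (c : ℝ) (v : GaussIndex → ℝ) (m : ℤ) : ℂ :=
  if h : 0 < m then c * (v (⟨m, h⟩, false) + I * v (⟨m, h⟩, true))
  else if h : 0 < -m then c * (v (⟨-m, h⟩, false) - I * v (⟨-m, h⟩, true))
  else 0

lemma measurable_gaussOf (c : ℝ) (m : ℤ) : Measurable fun v => gaussOf c v m := by
  unfold gaussOf
  split_ifs <;> fun_prop

/-- The rotation `(h_N, l_N) ↦ (-l_N, h_N)`, written as a permutation of the coordinates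
followed by coordinatewise maps, the form to which `iIndepFun.map_eq_map_perm_comp` applies. -/
def rotateAt (N : {n : ℤ // 0 < n}) (v : GaussIndex → ℝ) : GaussIndex → ℝ := fun i =>
  (if i = (N, false) then Neg.neg else id) (v (Equiv.swap (N, false) (N, true) i))

lemma measurable_rotateAt (N : {n : ℤ // 0 < n}) : Measurable (rotateAt N) := by
  unfold rotateAt
  refine measurable_pi_lambda _ fun i => ?_
  split_ifs <;> fun_prop

@[simp] lemma rotateAt_apply_false (N : {n : ℤ // 0 < n}) (v : GaussIndex → ℝ) :
    rotateAt N v (N, false) = -v (N, true) := by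
  simp [rotateAt]

@[simp] lemma rotateAt_apply_true (N : {n : ℤ // 0 < n}) (v : GaussIndex → ℝ) :
    rotateAt N v (N, true) = v (N, false) := by
  simp [rotateAt]

lemma rotateAt_apply_of_ne {N n : {n : ℤ // 0 < n}} (h : n ≠ N) (v : GaussIndex → ℝ)
    (b : Bool) :
    rotateAt N v (n, b) = v (n, b) := by
  rw [rotateAt, Equiv.swap_apply_of_ne_of_ne] <;> simp [h]

lemma gaussOf_rotateAt (c : ℝ) (N : {n : ℤ // 0 < n}) (v : GaussIndex → ℝ) (m : ℤ) :
    gaussOf c (rotateAt N v) m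
      = I ^ ((if (N : ℤ) = m then 1 else 0) - (if -(N : ℤ) = m then 1 else 0) : ℤ)
        * gaussOf c v m := by
  rcases lt_trichotomy m 0 with hm | rfl | hm
  · have hm' : 0 < -m := by omega
    by_cases hmN : -m = N
    · obtain rfl : N = ⟨-m, hm'⟩ := Subtype.ext hmN.symm
      simp only [gaussOf, dif_neg hm.not_gt, dif_pos hm', rotateAt_apply_false,
        rotateAt_apply_true, neg_neg, if_pos, if_neg (show -m ≠ m by omega)]
      push_cast
      rw [zpow_neg_one, inv_I]
      linear_combination (-(c : ℂ) * v (⟨-m, hm'⟩, true)) * I_sq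
    · have hne : (⟨-m, hm'⟩ : {n : ℤ // 0 < n}) ≠ N := fun h =>
        hmN (congrArg Subtype.val h)
      simp only [gaussOf, dif_neg hm.not_gt, dif_pos hm', rotateAt_apply_of_ne hne,
        if_neg (show (N : ℤ) ≠ m by omega), if_neg (show -(N : ℤ) ≠ m by omega)]
      simp
  · simp [gaussOf]
  · by_cases hmN : m = N
    · obtain rfl : N = ⟨m, hm⟩ := Subtype.ext hmN.symm
      simp only [gaussOf, dif_pos hm, rotateAt_apply_false, rotateAt_apply_true, if_pos,
        if_neg (show -m ≠ m by omega)]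
      push_cast
      rw [zpow_one]
      linear_combination (-(c : ℂ) * v (⟨m, hm⟩, true)) * I_sq
    · have hne : (⟨m, hm⟩ : {n : ℤ // 0 < n}) ≠ N := fun h => hmN (congrArg Subtype.val h)
      simp only [gaussOf, dif_pos hm, rotateAt_apply_of_ne hne,
        if_neg (show (N : ℤ) ≠ m by omega), if_neg (show -(N : ℤ) ≠ m by omega)]
      simp

lemma prod_map_gaussOf_rotateAt (c : ℝ) (N : {n : ℤ // 0 < n}) (v : GaussIndex → ℝ)
    (s : Multiset ℤ) :
    (s.map (gaussOf c (rotateAt N v))).prod = I ^ s.charge N * (s.map (gaussOf c v)).prod := by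
  induction s using Multiset.induction with
  | empty => simp [Multiset.charge]
  | cons a s ih =>
    rw [Multiset.map_cons, Multiset.prod_cons, gaussOf_rotateAt, ih, Multiset.charge_cons,
      zpow_add₀ I_ne_zero, Multiset.map_cons, Multiset.prod_cons]
    ring

def momentIntegrand {n m : ℕ} (c : ℝ) (s : Fin n → ℤ) (t : Fin m → ℤ) (v : GaussIndex → ℝ) :
    ℂ :=
  (∏ k, gaussOf c v (s k)) * starRingEnd ℂ (∏ k, gaussOf c v (t k))

lemma measurable_momentIntegrand {n m : ℕ} (c : ℝ) (s : Fin n → ℤ) (t : Fin m → ℤ) :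
    Measurable (momentIntegrand c s t) :=
  (Finset.measurable_prod _ fun k _ => measurable_gaussOf c (s k)).mul
    (continuous_conj.measurable.comp
      (Finset.measurable_prod _ fun k _ => measurable_gaussOf c (t k)))

lemma momentIntegrand_rotateAt {n m : ℕ} (c : ℝ) (s : Fin n → ℤ) (t : Fin m → ℤ)
    (N : {n : ℤ // 0 < n}) (v : GaussIndex → ℝ) :
    momentIntegrand c s t (rotateAt N v) =
      I ^ ((List.ofFn s : Multiset ℤ).charge N - (List.ofFn t : Multiset ℤ).charge N) *
        momentIntegrand c s t v := by
  have hprod : ∀ {n} (u : Fin n → ℤ) (w : GaussIndex → ℝ),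
      ∏ k, gaussOf c w (u k) = ((List.ofFn u : Multiset ℤ).map (gaussOf c w)).prod := by
    intro n u w
    rw [Multiset.map_coe, Multiset.prod_coe, List.map_ofFn, List.prod_ofFn]
    rfl
  simp only [momentIntegrand, hprod, prod_map_gaussOf_rotateAt, map_mul, map_zpow₀, conj_I,
    ← inv_I, inv_zpow', zpow_sub₀ I_ne_zero, zpow_neg]
  ring

lemma I_zpow_ne_one {q : ℤ} (hq : ¬ (4 : ℤ) ∣ q) : I ^ q ≠ 1 :=
  fun h => hq (by exact_mod_cast (isPrimitiveRoot_I.zpow_eq_one_iff_dvd q).mp h)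

namespace GaussianData

variable {Ω : Type*} [MeasurableSpace Ω] {p : Measure Ω}

def coords (G : GaussianData Ω p) (ω : Ω) : GaussIndex → ℝ := fun nb =>
  if nb.2 then G.l nb.1 ω else G.h nb.1 ω

lemma g_eq_gaussOf (G : GaussianData Ω p) {m : ℤ} (hm : m ≠ 0) (ω : Ω) :
    G.g m ω = gaussOf G.c (G.coords ω) m := by
  rcases lt_or_gt_of_ne hm with h | h
  · have h' : 0 < -m := by omega
    have := G.g_neg (-m) h' ω
    rw [neg_neg] at this
    simp [gaussOf, h, h.not_gt, coords, this, G.g_def (-m) h' ω, sub_eq_add_neg]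
  · simp [gaussOf, h, coords, G.g_def m h ω]

lemma measurable_coords (G : GaussianData Ω p) : Measurable G.coords :=
  measurable_pi_lambda _ fun ⟨⟨n, hn⟩, b⟩ => by
    cases b
    · exact G.h_meas n hn
    · exact G.l_meas n hn

lemma map_rotateAt_coords (G : GaussianData Ω p) (N : {n : ℤ // 0 < n}) :
    (p.map G.coords).map (rotateAt N) = p.map G.coords := by
  have hcoords : G.coords = fun ω i => (if i.2 then G.l i.1 else G.h i.1) ω := by
    simp only [ite_apply]
    rfl
  rw [Measure.map_map (measurable_rotateAt N) G.measurable_coords, hcoords]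
  refine G.indep.map_eq_map_perm_comp (μ := gaussianReal 0 1) ?_ ?_
    (Equiv.swap (N, false) (N, true)) (φ := fun i => if i = (N, false) then Neg.neg else id)
    (fun i => ?_) (fun i => ?_)
  · rintro ⟨⟨n, hn⟩, _ | _⟩
    exacts [G.h_meas n hn, G.l_meas n hn]
  · rintro ⟨⟨n, hn⟩, _ | _⟩
    exacts [G.h_law n hn, G.l_law n hn]
  · split_ifs
    exacts [measurable_neg, measurable_id]
  · split_ifs
    · simpa using gaussianReal_map_neg (μ := 0) (v := 1)
    · exact Measure.map_id

end GaussianData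

theorem moment_tilde_A5c_orthogonal_general
    {Ω : Type*} [MeasurableSpace Ω] (p : Measure Ω)
    (G : GaussianData Ω p)
    (iv jv : ℤ)
    (jt it : Fin 5 → ℤ)
    (hjt0 : ∀ k, jt k ≠ 0) (hit0 : ∀ k, it k ≠ 0)
    (hjtsum : ∑ k, jt k = 0) (hitsum : ∑ k, it k = 0)
    (hjtmem : ∃ l m : Fin 5, l ≠ m ∧ jt l = jv ∧ jt m = -jv)
    (hitmem : ∃ l m : Fin 5, l ≠ m ∧ it l = iv ∧ it m = -iv)
    (hne : ((List.ofFn jt : Multiset ℤ).erase jv).erase (-jv) ≠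
        ((List.ofFn it : Multiset ℤ).erase iv).erase (-iv)) :
    ∫ ω, (∏ k, G.g (jt k) ω) * starRingEnd ℂ (∏ k, G.g (it k) ω) ∂p = 0 := by
  obtain ⟨N, hN, hq⟩ :=
    exists_pos_not_four_dvd_charge_ofFn_sub hjt0 hit0 hjtsum hitsum hjtmem hitmem hne
  have hpoint : ∀ ω, (∏ k, G.g (jt k) ω) * starRingEnd ℂ (∏ k, G.g (it k) ω) =
      momentIntegrand G.c jt it (G.coords ω) := fun ω => by
    simp only [momentIntegrand, G.g_eq_gaussOf (hjt0 _), G.g_eq_gaussOf (hit0 _)]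
  have hmeas := measurable_momentIntegrand G.c jt it
  simp_rw [hpoint]
  rw [← integral_map G.measurable_coords.aemeasurable hmeas.aestronglyMeasurable]
  exact integral_eq_zero_of_map_eq_of_comp_eq_smul (measurable_rotateAt ⟨N, hN⟩)
    (G.map_rotateAt_coords _) hmeas.aestronglyMeasurable (I_zpow_ne_one hq)
    (momentIntegrand_rotateAt G.c jt it _)

/-- Let `i, j > 0`, `(j_1,…,j_5) ∈ 𝒜̃_5^{c,j}`,
`(i_1,…,i_5) ∈ 𝒜̃_5^{c,i}`.  If the multiset `{j_1,…,j_5}` with one copy of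
`j` and one copy of `-j` removed differs from the multiset `{i_1,…,i_5}` with
one copy of `i` and one copy of `-i` removed, then the mixed moment vanishes. -/
theorem moment_tilde_A5c_orthogonal
    {Ω : Type*} [MeasurableSpace Ω] (p : Measure Ω) [IsProbabilityMeasure p]
    (G : GaussianData Ω p)
    (iv jv : ℤ) (hiv : 0 < iv) (hjv : 0 < jv)
    (jt it : Fin 5 → ℤ)
    (hjt0 : ∀ k, jt k ≠ 0) (hit0 : ∀ k, it k ≠ 0)
    (hjtsum : ∑ k, jt k = 0) (hitsum : ∑ k, it k = 0)
    (hjtmem : ∃ l m : Fin 5, l ≠ m ∧ jt l = jv ∧ jt m = -jv)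
    (hitmem : ∃ l m : Fin 5, l ≠ m ∧ it l = iv ∧ it m = -iv)
    (hne : ((List.ofFn jt : Multiset ℤ).erase jv).erase (-jv) ≠
        ((List.ofFn it : Multiset ℤ).erase iv).erase (-iv)) :
    ∫ ω, (∏ k, G.g (jt k) ω) * starRingEnd ℂ (∏ k, G.g (it k) ω) ∂p = 0 :=
  moment_tilde_A5c_orthogonal_general p G iv jv jt it hjt0 hit0 hjtsum hitsum hjtmem hitmem hne
end

section
/- There exists a constant C > 0 such that for every integer N ≥ 2, the sum over pairs of nonzero integers j, l with 0 < |j| ≤ N, 0 < |l| ≤ N and |j + l| > N of 1/(|j|·l²) is at most C·(ln N)/N. -/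
/-!
If `|j + l| > N` then `|j| ≥ N + 1 - |l|`, so each term is at most `1 / ((N + 1 - |l|) l²)`, and
for fixed `l` exactly `2|l|` integers `j` with `|j| ≤ N` satisfy `|j| + |l| > N`. The sum is
therefore at most `∑_{0<|l|≤N} 2 / (|l| (N + 1 - |l|)) = 4 ∑_{m=1}^N 1 / (m (N + 1 - m))`, which
by partial fractions equals `8 H_N / (N + 1)`, and `H_N ≤ 1 + ln N`.
-/

open Finset

theorem sum_Icc_neg_natAbs {M : Type*} [AddCommMonoid M] (f : ℕ → M) (n : ℕ) :
    ∑ l ∈ Icc (-(n : ℤ)) n, f l.natAbs = f 0 + 2 • ∑ m ∈ Icc 1 n, f m := by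
  induction n with
  | zero => simp
  | succ n ih =>
    have hIcc : Icc (-((n + 1 : ℕ) : ℤ)) (n + 1 : ℕ) =
        insert (-(n + 1 : ℤ)) (insert (n + 1 : ℤ) (Icc (-(n : ℤ)) n)) := by
      ext x; simp only [mem_Icc, mem_insert]; omega
    rw [hIcc, sum_insert (by simp only [mem_insert, mem_Icc]; omega),
      sum_insert (by simp only [mem_Icc]; omega), ih, sum_Icc_succ_top (by omega)]
    have hneg : (-(n + 1 : ℤ)).natAbs = n + 1 := by omega
    have hpos : (n + 1 : ℤ).natAbs = n + 1 := by omega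
    rw [hneg, hpos, two_nsmul, two_nsmul]
    abel

theorem sum_Icc_one_div_mul_sub (n : ℕ) :
    ∑ m ∈ Icc 1 n, 1 / ((m : ℝ) * (n + 1 - m)) = 2 * harmonic n / (n + 1) := by
  have hsplit : ∀ m ∈ Icc 1 n,
      1 / ((m : ℝ) * (n + 1 - m)) = (1 / m + 1 / ((n : ℝ) + 1 - m)) / (n + 1) := by
    intro m hm
    obtain ⟨h1m, hmn⟩ := mem_Icc.mp hm
    have h1 : (1 : ℝ) ≤ m := by exact_mod_cast h1m
    have h2 : (m : ℝ) < n + 1 := by exact_mod_cast Nat.lt_succ_of_le hmn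
    field_simp [(by linarith : (n : ℝ) + 1 - m ≠ 0)]
    ring
  have hreflect : ∑ m ∈ Icc 1 n, 1 / ((n : ℝ) + 1 - m) = ∑ m ∈ Icc 1 n, 1 / (m : ℝ) := by
    refine sum_nbij' (fun m => n + 1 - m) (fun m => n + 1 - m) ?_ ?_ ?_ ?_ fun m hm => ?_
    iterate 4 intro m hm; simp only [mem_Icc] at hm ⊢; omega
    rw [Nat.cast_sub (Nat.le_succ_of_le (mem_Icc.mp hm).2)]
    push_cast
    ring
  rw [sum_congr rfl hsplit, ← sum_div, sum_add_distrib, hreflect, harmonic_eq_sum_Icc]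
  push_cast
  simp only [one_div]
  ring

theorem card_filter_lt_abs_add (n : ℕ) {l : ℤ} (hl : |l| ≤ n) :
    #{j ∈ Icc (-(n : ℤ)) n | (n : ℤ) < |j| + |l|} = 2 * l.natAbs := by
  rw [← Int.natCast_natAbs] at hl ⊢
  have hfilter : {j ∈ Icc (-(n : ℤ)) n | (n : ℤ) < |j| + l.natAbs} =
      Icc (-(n : ℤ)) n \ Icc (l.natAbs - n) (n - l.natAbs) := by
    ext j
    simp only [mem_filter, mem_sdiff, mem_Icc]
    rw [← Int.natCast_natAbs]
    omega
  rw [hfilter, card_sdiff_of_subset, Int.card_Icc, Int.card_Icc]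
  · omega
  · intro j; simp only [mem_Icc]; omega

theorem sum_filter_lt_abs_add {M : Type*} [AddCommMonoid M] (n : ℕ) (g : ℤ → M) :
    ∑ q ∈ (Icc (-(n : ℤ)) n ×ˢ Icc (-(n : ℤ)) n).filter (fun q => (n : ℤ) < |q.1| + |q.2|), g q.2 =
      ∑ l ∈ Icc (-(n : ℤ)) n, (2 * l.natAbs) • g l := by
  rw [sum_filter, sum_product_right]
  refine sum_congr rfl fun l hl => ?_
  rw [← sum_filter]
  dsimp only
  rw [sum_const, card_filter_lt_abs_add n (abs_le.mpr (mem_Icc.mp hl))]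

theorem one_div_abs_mul_sq_le {n : ℕ} {j l : ℤ} (hl : |l| ≤ n) (hjl : (n : ℤ) < |j + l|) :
    1 / (|(j : ℝ)| * (l : ℝ) ^ 2) ≤ 1 / (((n : ℝ) + 1 - l.natAbs) * l.natAbs ^ 2) := by
  rw [Nat.cast_natAbs, Int.cast_abs, sq_abs]
  rcases eq_or_ne l 0 with rfl | hl0
  · simp -- both sides are `1 / 0 = 0`
  have hj : (n : ℤ) + 1 - |l| ≤ |j| := by linarith [abs_add_le j l]
  have hj' : (n : ℝ) + 1 - |(l : ℝ)| ≤ |(j : ℝ)| := by exact_mod_cast hj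
  have hpos : (0 : ℝ) < (n : ℝ) + 1 - |(l : ℝ)| := by
    have : |(l : ℝ)| ≤ n := by exact_mod_cast hl
    linarith
  gcongr

theorem sum_Icc_nsmul_one_div_sub_mul_sq (n : ℕ) :
    ∑ l ∈ Icc (-(n : ℤ)) n, (2 * l.natAbs) • (1 / (((n : ℝ) + 1 - l.natAbs) * l.natAbs ^ 2)) =
      8 * (harmonic n : ℝ) / (n + 1) := by
  have hterm : ∀ m ∈ Icc 1 n, (2 * m) • (1 / (((n : ℝ) + 1 - m) * m ^ 2)) =
      2 * (1 / ((m : ℝ) * (n + 1 - m))) := fun m hm => by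
    have : (m : ℝ) ≠ 0 := by have := (mem_Icc.mp hm).1; positivity
    rw [nsmul_eq_mul]
    push_cast
    field_simp
  rw [sum_Icc_neg_natAbs (fun m => (2 * m) • (1 / (((n : ℝ) + 1 - m) * m ^ 2))),
    sum_congr rfl hterm, ← mul_sum, sum_Icc_one_div_mul_sub]
  simp only [mul_zero, zero_smul, zero_add, nsmul_eq_mul]
  push_cast
  ring

theorem eight_mul_harmonic_div_le {n : ℕ} (hn : 2 ≤ n) :
    8 * (harmonic n : ℝ) / (n + 1) ≤ 20 * Real.log n / n := by
  have hn' : (2 : ℝ) ≤ n := by exact_mod_cast hn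
  have hlog : 2 / 3 ≤ Real.log n := by
    linarith [Real.log_two_gt_d9, Real.log_le_log (by norm_num) hn']
  calc 8 * (harmonic n : ℝ) / (n + 1) ≤ 8 * (1 + Real.log n) / n := by
        gcongr 8 * ?_ / ?_
        · exact harmonic_le_one_add_log n
        · linarith
    _ ≤ 20 * Real.log n / n := by gcongr ?_ / _; linarith

/-- There is `C > 0` such that for every `N ≥ 2`,
`∑_{0<|j|,|l|≤N, |j+l|>N} 1/(|j| l²) ≤ C (ln N)/N`. -/
theorem sum_inv_abs_mul_sq_le :
    ∃ C : ℝ, 0 < C ∧ ∀ N : ℕ, 2 ≤ N →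
      ∑ q ∈ ((Finset.Icc (-(N : ℤ)) N ×ˢ Finset.Icc (-(N : ℤ)) N).filter
          (fun q => q.1 ≠ 0 ∧ q.2 ≠ 0 ∧ |q.1 + q.2| > (N : ℤ))),
        1 / (|(q.1 : ℝ)| * (q.2 : ℝ) ^ 2) ≤ C * Real.log N / N := by
  refine ⟨20, by norm_num, fun N hN => ?_⟩
  set box := Finset.Icc (-(N : ℤ)) N ×ˢ Finset.Icc (-(N : ℤ)) N
  set w : ℕ → ℝ := fun m => 1 / (((N : ℝ) + 1 - m) * m ^ 2)
  have hw : ∀ l ∈ Icc (-(N : ℤ)) N, 0 ≤ w l.natAbs := fun l hl => by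
    have : l.natAbs ≤ N := by rw [mem_Icc] at hl; omega
    have : (l.natAbs : ℝ) ≤ N := by exact_mod_cast this
    exact one_div_nonneg.mpr (mul_nonneg (by linarith) (sq_nonneg _))
  calc _ ≤ ∑ q ∈ box.filter (fun q => q.1 ≠ 0 ∧ q.2 ≠ 0 ∧ |q.1 + q.2| > (N : ℤ)),
          w q.2.natAbs := by
        refine sum_le_sum fun q hq => ?_
        rw [mem_filter] at hq
        exact one_div_abs_mul_sq_le (abs_le.mpr (mem_Icc.mp (mem_product.mp hq.1).2)) hq.2.2.2
    _ ≤ ∑ q ∈ box.filter (fun q => (N : ℤ) < |q.1| + |q.2|), w q.2.natAbs := by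
        refine sum_le_sum_of_subset_of_nonneg (fun q hq => ?_)
          fun q hq _ => hw q.2 (mem_product.mp (mem_filter.mp hq).1).2
        rw [mem_filter] at hq ⊢
        exact ⟨hq.1, hq.2.2.2.trans_le (abs_add_le q.1 q.2)⟩
    _ = 8 * harmonic N / (N + 1) := by
        rw [sum_filter_lt_abs_add N fun l => w l.natAbs, sum_Icc_nsmul_one_div_sub_mul_sq]
    _ ≤ 20 * Real.log N / N := eight_mul_harmonic_div_le hN
end

section
/- For every integer m ≥ 2 there exists a constant C > 0 such that for every integer N ≥ 2, the sum over m-tuples of nonzero integers (j_1,…,j_m) with 0 < |j_k| ≤ N for all k and |j_1 + ⋯ + j_m| > N of 1/(|j_1| · ∏_{k=2}^{m} |j_k|²) is at most C·(ln N)/N. -/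
/-!
Write `m = n + 1` and split a tuple into its head `x` and tail `b ∈ ([-N, N] ∖ {0})ⁿ`, so the
summand is `|x|⁻¹ ∏ bᵢ⁻²`. Let `H = Σ |y|⁻¹ ≤ 2 (1 + log N)` and `Z = Σ y⁻² ≤ 4` over
`0 < |y| ≤ N`. Since `|x + Σ bᵢ| > N`, either some `|bᵢ| > N / m`, or all `|bᵢ| ≤ N / m` and then
`|x| > N / m`.

* In the first case sum over `x` freely (giving `H`); the large coordinate contributes
  `Σ_{|y| > N/m} y⁻² ≤ 2 m² / N` and the others `Z` each.
* In the second case `|x|⁻¹ < m / N`, and for a fixed tail at most `|Σ bᵢ|` values of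
  `x ∈ [-N, N]` have `|x + Σ bᵢ| > N`. Finally `|Σ bᵢ| ∏ bᵢ⁻² ≤ Σₖ |bₖ|⁻¹ ∏_{i ≠ k} bᵢ⁻²`, whose sum
  over all tails factors as `n H Zⁿ⁻¹`.
-/

open Finset

noncomputable def puncturedIcc (N : ℕ) : Finset ℤ := (Icc (-(N : ℤ)) N).erase 0

lemma mem_puncturedIcc {N : ℕ} {x : ℤ} :
    x ∈ puncturedIcc N ↔ x ≠ 0 ∧ -(N : ℤ) ≤ x ∧ x ≤ N := by
  simp [puncturedIcc]

lemma sum_puncturedIcc_natAbs {M : Type*} [AddCommMonoid M] (N : ℕ) (f : ℕ → M) :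
    ∑ x ∈ puncturedIcc N, f x.natAbs = 2 • ∑ k ∈ Icc 1 N, f k := by
  rw [← sum_fiberwise_of_maps_to (g := Int.natAbs) (t := Icc 1 N), smul_sum]
  · refine sum_congr rfl fun k hk => ?_
    have hfiber : (puncturedIcc N).filter (fun x => x.natAbs = k) = {(k : ℤ), -(k : ℤ)} := by
      ext x; simp only [mem_Icc] at hk; simp [mem_puncturedIcc]; omega
    rw [sum_congr rfl fun x hx => by rw [(mem_filter.1 hx).2], sum_const, hfiber,
      card_pair (by simp at hk; omega)]
  · intro x hx; simp only [mem_puncturedIcc] at hx; simp; omega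

lemma sum_puncturedIcc_inv_abs_le (N : ℕ) :
    ∑ x ∈ puncturedIcc N, |(x : ℝ)|⁻¹ ≤ 2 * (1 + Real.log N) := by
  have h := sum_puncturedIcc_natAbs N fun k => ((k : ℝ))⁻¹
  simp only [Nat.cast_natAbs, Int.cast_abs] at h
  rw [h, nsmul_eq_mul, Nat.cast_two]
  gcongr
  simpa [harmonic_eq_sum_Icc] using harmonic_le_one_add_log N

lemma sum_puncturedIcc_inv_sq_le (N : ℕ) : ∑ x ∈ puncturedIcc N, ((x : ℝ) ^ 2)⁻¹ ≤ 4 := by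
  have h := sum_puncturedIcc_natAbs N fun k => ((k : ℝ) ^ 2)⁻¹
  simp only [Nat.cast_natAbs, Int.cast_abs, sq_abs] at h
  have hIoo : Icc 1 N = Ioo 0 (N + 1) := by ext; simp; omega
  rw [h, nsmul_eq_mul, hIoo]
  have := sum_Ioo_inv_sq_le (α := ℝ) 0 (N + 1)
  norm_num at this
  linarith

lemma card_puncturedIcc (N : ℕ) : (puncturedIcc N).card = 2 * N := by
  rw [puncturedIcc, card_erase_of_mem (by simp), Int.card_Icc]; omega

lemma sum_puncturedIcc_inv_sq_of_lt_mul_abs_le (m N : ℕ) :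
    ∑ x ∈ (puncturedIcc N).filter (fun x => (N : ℤ) < m * |x|), ((x : ℝ) ^ 2)⁻¹
      ≤ 2 * m ^ 2 / N := by
  rcases N.eq_zero_or_pos with rfl | hN
  · simp [puncturedIcc]
  have hterm : ∀ x ∈ (puncturedIcc N).filter (fun x => (N : ℤ) < m * |x|),
      ((x : ℝ) ^ 2)⁻¹ ≤ m ^ 2 / N ^ 2 := by
    intro x hx
    rw [mem_filter, mem_puncturedIcc] at hx
    have hlt : (N : ℝ) < m * |(x : ℝ)| := by exact_mod_cast hx.2
    have hsq : (N : ℝ) ^ 2 ≤ m ^ 2 * (x : ℝ) ^ 2 := by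
      rw [← sq_abs (x : ℝ), ← mul_pow]; exact pow_le_pow_left₀ (by positivity) hlt.le 2
    have hx0 : (x : ℝ) ≠ 0 := Int.cast_ne_zero.2 hx.1.1
    rw [inv_eq_one_div, div_le_div_iff₀ (by positivity) (by positivity)]
    linarith
  have hcard : (((puncturedIcc N).filter (fun x => (N : ℤ) < m * |x|)).card : ℝ) ≤ 2 * N := by
    exact_mod_cast (card_filter_le _ _).trans (card_puncturedIcc N).le
  calc _ ≤ _ := sum_le_card_nsmul _ _ _ hterm
    _ ≤ 2 * N * (m ^ 2 / N ^ 2 : ℝ) := by rw [nsmul_eq_mul]; gcongr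
    _ = 2 * m ^ 2 / N := by field_simp

lemma card_filter_lt_abs_add_le (N s : ℤ) :
    ((Icc (-N) N).filter (fun x => N < |x + s|)).card ≤ s.natAbs := by
  calc _ ≤ (Ioc (N - s) N ∪ Ico (-N) (-N - s)).card := by
        refine card_le_card fun x hx => ?_
        simp only [mem_filter, mem_Icc, mem_union, mem_Ioc, mem_Ico] at hx ⊢
        rcases lt_abs.mp hx.2 with h | h <;> omega
    _ ≤ _ := (card_union_le _ _).trans (by rw [Int.card_Ioc, Int.card_Ico]; omega)

lemma sum_inv_abs_le_of_mul_abs_add_le {m N : ℕ} {s : ℤ} (hs : m * |s| + N ≤ m * N) :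
    ∑ x ∈ (puncturedIcc N).filter (fun x => (N : ℤ) < |x + s|), |(x : ℝ)|⁻¹
      ≤ m / N * |(s : ℝ)| := by
  have hterm : ∀ x ∈ (puncturedIcc N).filter (fun x => (N : ℤ) < |x + s|),
      |(x : ℝ)|⁻¹ ≤ m / N := by
    intro x hx
    rw [mem_filter, mem_puncturedIcc] at hx
    obtain ⟨⟨hx0, hxl, hxu⟩, hlt⟩ := hx
    have hN : (0 : ℝ) < N := by exact_mod_cast (show (0 : ℤ) < N by omega)
    have hxs := abs_add_le x s
    have hlarge : (N : ℤ) ≤ m * |x| := by nlinarith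
    have hlarge' : (N : ℝ) ≤ m * |(x : ℝ)| := by exact_mod_cast hlarge
    have hxpos : (0 : ℝ) < |(x : ℝ)| := by positivity
    rw [inv_eq_one_div, div_le_div_iff₀ hxpos hN]
    linarith
  have hcard : (((puncturedIcc N).filter (fun x => (N : ℤ) < |x + s|)).card : ℝ) ≤ |(s : ℝ)| := by
    have := (card_le_card (filter_subset_filter _ (erase_subset 0 _))).trans
      (card_filter_lt_abs_add_le N s)
    exact_mod_cast (Nat.cast_le.2 this).trans_eq (Nat.cast_natAbs s)
  calc _ ≤ _ := sum_le_card_nsmul _ _ _ hterm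
    _ ≤ |(s : ℝ)| * (m / N) := by rw [nsmul_eq_mul]; gcongr
    _ = _ := mul_comm _ _

lemma sum_piFinset_mul_prod_erase {ι α R : Type*} [Fintype ι] [DecidableEq ι] [CommSemiring R]
    (s : Finset α) (k : ι) (h g : α → R) :
    ∑ b ∈ Fintype.piFinset (fun _ : ι => s), h (b k) * ∏ i ∈ univ.erase k, g (b i)
      = (∑ x ∈ s, h x) * (∑ x ∈ s, g x) ^ (Fintype.card ι - 1) := by
  have hsplit : ∀ F : ι → R, ∏ i, F i = F k * ∏ i ∈ univ.erase k, F i :=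
    fun F => (mul_prod_erase univ F (mem_univ k)).symm
  have key : ∀ b : ι → α,
      h (b k) * ∏ i ∈ univ.erase k, g (b i) = ∏ i, (if i = k then h else g) (b i) := by
    intro b
    rw [hsplit, if_pos rfl]
    congr 1
    exact prod_congr rfl fun i hi => by rw [if_neg (ne_of_mem_erase hi)]
  simp_rw [key]
  rw [← prod_univ_sum, hsplit, if_pos rfl]
  congr 1
  rw [prod_congr rfl fun i hi => by rw [if_neg (ne_of_mem_erase hi)], prod_const,
    card_erase_of_mem (mem_univ k), card_univ]

lemma sum_filter_exists_le_sum {ι α : Type*} [Fintype ι] (s : Finset α) (p : ι → α → Prop)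
    [∀ k, DecidablePred (p k)] [DecidablePred fun a => ∃ k, p k a] (f : α → ℝ)
    (hf : ∀ a ∈ s, 0 ≤ f a) :
    ∑ a ∈ s.filter (fun a => ∃ k, p k a), f a ≤ ∑ k, ∑ a ∈ s.filter (p k), f a := by
  simp_rw [sum_filter]
  rw [sum_comm]
  refine sum_le_sum fun a ha => ?_
  split_ifs with hex
  · obtain ⟨k, hk⟩ := hex
    calc f a = if p k a then f a else 0 := (if_pos hk).symm
      _ ≤ _ := single_le_sum (f := fun k => if p k a then f a else 0)
          (fun k _ => by split_ifs <;> simp [hf a ha]) (mem_univ k)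
  · exact sum_nonneg fun k _ => by split_ifs <;> simp [hf a ha]

lemma abs_mul_inv_sq {K : Type*} [Field K] [LinearOrder K] [IsStrictOrderedRing K] (y : K) :
    |y| * (y ^ 2)⁻¹ = |y|⁻¹ := by
  rcases eq_or_ne y 0 with rfl | hy
  · simp
  · rw [← sq_abs, sq, mul_inv, ← mul_assoc, mul_inv_cancel₀ (abs_ne_zero.2 hy), one_mul]

lemma sum_abs_sum_mul_prod_inv_sq_le {ι : Type*} [Fintype ι] [DecidableEq ι] (s : Finset ℤ) :
    ∑ b ∈ Fintype.piFinset (fun _ : ι => s), |∑ i, (b i : ℝ)| * ∏ i, ((b i : ℝ) ^ 2)⁻¹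
      ≤ Fintype.card ι *
        ((∑ x ∈ s, |(x : ℝ)|⁻¹) * (∑ x ∈ s, ((x : ℝ) ^ 2)⁻¹) ^ (Fintype.card ι - 1)) := by
  calc _ ≤ ∑ b ∈ Fintype.piFinset (fun _ : ι => s), ∑ k, |(b k : ℝ)| * ∏ i, ((b i : ℝ) ^ 2)⁻¹ := by
        refine sum_le_sum fun b _ => ?_
        rw [← sum_mul]
        exact mul_le_mul_of_nonneg_right (abs_sum_le_sum_abs _ _)
          (prod_nonneg fun i _ => by positivity)
    _ = ∑ k : ι, ∑ b ∈ Fintype.piFinset (fun _ : ι => s),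
          |(b k : ℝ)|⁻¹ * ∏ i ∈ univ.erase k, ((b i : ℝ) ^ 2)⁻¹ := by
        rw [sum_comm]
        refine sum_congr rfl fun k _ => sum_congr rfl fun b _ => ?_
        rw [← mul_prod_erase univ _ (mem_univ k), ← mul_assoc, abs_mul_inv_sq]
    _ = _ := by
        simp_rw [sum_piFinset_mul_prod_erase s _ (fun x : ℤ => |(x : ℝ)|⁻¹)
          (fun x : ℤ => ((x : ℝ) ^ 2)⁻¹)]
        rw [sum_const, card_univ, nsmul_eq_mul]

lemma sum_filter_exists_prod_le {ι α : Type*} [Fintype ι] [DecidableEq ι] (s : Finset α)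
    (p : α → Prop) [DecidablePred p] [DecidablePred fun b : ι → α => ∃ k, p (b k)] (g : α → ℝ)
    (hg : ∀ x, 0 ≤ g x) :
    ∑ b ∈ (Fintype.piFinset (fun _ : ι => s)).filter (fun b => ∃ k, p (b k)), ∏ i, g (b i)
      ≤ Fintype.card ι * ((∑ x ∈ s.filter p, g x) * (∑ x ∈ s, g x) ^ (Fintype.card ι - 1)) := by
  have hunion := sum_filter_exists_le_sum (Fintype.piFinset (fun _ : ι => s))
    (fun k b => p (b k)) (fun b => ∏ i, g (b i)) fun b _ => prod_nonneg fun i _ => hg _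
  refine hunion.trans (le_of_eq ?_)
  calc _ = ∑ k : ι, ∑ b ∈ Fintype.piFinset (fun _ : ι => s),
          (if p (b k) then g (b k) else 0) * ∏ i ∈ univ.erase k, g (b i) := by
        refine sum_congr rfl fun k _ => ?_
        rw [sum_filter]
        refine sum_congr rfl fun b _ => ?_
        rw [← mul_prod_erase univ _ (mem_univ k), ite_mul, zero_mul]
    _ = _ := by
        simp_rw [sum_piFinset_mul_prod_erase s _ (fun x => if p x then g x else 0) g, ← sum_filter]
        rw [sum_const, card_univ, nsmul_eq_mul]

lemma sum_filter_piFinset_eq_sum_tail_sum_head (n N : ℕ) :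
    ∑ j ∈ (Fintype.piFinset (fun _ : Fin (n + 1) => Icc (-(N : ℤ)) N)).filter
          (fun j => (∀ k, j k ≠ 0) ∧ |∑ k, j k| > (N : ℤ)),
        1 / (|(j ⟨0, n.succ_pos⟩ : ℝ)| *
          ∏ k ∈ univ.filter (fun k : Fin (n + 1) => 1 ≤ (k : ℕ)), ((j k : ℝ)) ^ 2)
      = ∑ b ∈ Fintype.piFinset (fun _ : Fin n => puncturedIcc N),
          ∑ x ∈ (puncturedIcc N).filter (fun x => (N : ℤ) < |x + ∑ i, b i|),
            |(x : ℝ)|⁻¹ * ∏ i, ((b i : ℝ) ^ 2)⁻¹ := by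
  rw [sum_sigma']
  refine sum_nbij' (fun j => ⟨Fin.tail j, j 0⟩) (fun p => Fin.cons p.2 p.1) ?_ ?_ ?_ ?_ ?_
  · intro j hj
    simp only [mem_filter, Fintype.mem_piFinset, mem_Icc, Fin.forall_fin_succ,
      Fin.sum_univ_succ, mem_sigma, mem_puncturedIcc, Fin.tail] at hj ⊢
    exact ⟨fun i => ⟨hj.2.1.2 i, hj.1.2 i⟩,
      mem_filter.2 ⟨mem_puncturedIcc.2 ⟨hj.2.1.1, hj.1.1⟩, hj.2.2⟩⟩
  · intro p hp
    simp only [mem_filter, Fintype.mem_piFinset, mem_Icc, Fin.forall_fin_succ,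
      Fin.sum_univ_succ, mem_sigma, mem_puncturedIcc, Fin.cons_zero, Fin.cons_succ] at hp ⊢
    exact ⟨⟨hp.2.1.2, fun i => (hp.1 i).2⟩, ⟨hp.2.1.1, fun i => (hp.1 i).1⟩, hp.2.2⟩
  · intro j _; simp
  · intro p _; simp
  · intro j _
    simp [prod_filter, Fin.prod_univ_succ, Fin.tail, mul_comm]

lemma sum_puncturedIcc_inv_sq_pow_le (n N : ℕ) :
    (∑ x ∈ puncturedIcc N, ((x : ℝ) ^ 2)⁻¹) ^ (n - 1) ≤ 4 ^ n :=
  (pow_le_pow_left₀ (sum_nonneg fun x _ => by positivity) (sum_puncturedIcc_inv_sq_le N) _).trans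
    (pow_le_pow_right₀ (by norm_num) (Nat.sub_le n 1))

lemma sum_head_mul_prod_of_small_tail_le (n N : ℕ) :
    ∑ b ∈ (Fintype.piFinset (fun _ : Fin n => puncturedIcc N)).filter
        (fun b => ¬ ∃ k, (N : ℤ) < (n + 1 : ℕ) * |b k|),
      (∑ x ∈ (puncturedIcc N).filter (fun x => (N : ℤ) < |x + ∑ i, b i|), |(x : ℝ)|⁻¹) *
        ∏ i, ((b i : ℝ) ^ 2)⁻¹
      ≤ (n + 1) / N * (n * (2 * (1 + Real.log N) * 4 ^ n)) := by
  have hhead : ∀ b ∈ (Fintype.piFinset (fun _ : Fin n => puncturedIcc N)).filter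
      (fun b => ¬ ∃ k, (N : ℤ) < (n + 1 : ℕ) * |b k|),
      ∑ x ∈ (puncturedIcc N).filter (fun x => (N : ℤ) < |x + ∑ i, b i|), |(x : ℝ)|⁻¹
        ≤ (n + 1) / N * |∑ i, (b i : ℝ)| := by
    intro b hb
    have hb' : ∀ i, ((n + 1 : ℕ) : ℤ) * |b i| ≤ N :=
      fun i => not_lt.1 fun h => (mem_filter.1 hb).2 ⟨i, h⟩
    have hsum : ((n + 1 : ℕ) : ℤ) * |∑ i, b i| + N ≤ (n + 1 : ℕ) * N := by
      have hcoords : ((n + 1 : ℕ) : ℤ) * ∑ i, |b i| ≤ n * N := by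
        simpa [mul_sum] using sum_le_card_nsmul univ _ _ fun i _ => hb' i
      have := mul_le_mul_of_nonneg_left (abs_sum_le_sum_abs (fun i => b i) univ)
        (Nat.cast_nonneg (α := ℤ) (n + 1))
      push_cast at *
      linarith
    simpa using sum_inv_abs_le_of_mul_abs_add_le hsum
  have htails := sum_abs_sum_mul_prod_inv_sq_le (ι := Fin n) (puncturedIcc N)
  rw [Fintype.card_fin] at htails
  calc _ ≤ ∑ b ∈ (Fintype.piFinset (fun _ : Fin n => puncturedIcc N)).filter
          (fun b => ¬ ∃ k, (N : ℤ) < (n + 1 : ℕ) * |b k|),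
          (n + 1) / N * (|∑ i, (b i : ℝ)| * ∏ i, ((b i : ℝ) ^ 2)⁻¹) :=
        sum_le_sum fun b hb => by
          rw [← mul_assoc]
          exact mul_le_mul_of_nonneg_right (hhead b hb) (prod_nonneg fun i _ => by positivity)
    _ ≤ ∑ b ∈ Fintype.piFinset (fun _ : Fin n => puncturedIcc N),
          (n + 1) / N * (|∑ i, (b i : ℝ)| * ∏ i, ((b i : ℝ) ^ 2)⁻¹) :=
        sum_le_sum_of_subset_of_nonneg (filter_subset _ _) fun b _ _ => by positivity
    _ ≤ _ := by
        rw [← mul_sum]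
        gcongr
        refine htails.trans ?_
        gcongr
        · exact sum_puncturedIcc_inv_abs_le N
        · exact sum_puncturedIcc_inv_sq_pow_le n N

lemma sum_head_mul_prod_of_large_tail_le (n N : ℕ) :
    ∑ b ∈ (Fintype.piFinset (fun _ : Fin n => puncturedIcc N)).filter
        (fun b => ∃ k, (N : ℤ) < (n + 1 : ℕ) * |b k|),
      (∑ x ∈ (puncturedIcc N).filter (fun x => (N : ℤ) < |x + ∑ i, b i|), |(x : ℝ)|⁻¹) *
        ∏ i, ((b i : ℝ) ^ 2)⁻¹
      ≤ 2 * (1 + Real.log N) * (n * (2 * (n + 1) ^ 2 / N * 4 ^ n)) := by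
  have htails := sum_filter_exists_prod_le (ι := Fin n) (puncturedIcc N)
    (fun x => (N : ℤ) < (n + 1 : ℕ) * |x|) (fun x : ℤ => ((x : ℝ) ^ 2)⁻¹) fun x => by positivity
  rw [Fintype.card_fin] at htails
  calc _ ≤ ∑ b ∈ (Fintype.piFinset (fun _ : Fin n => puncturedIcc N)).filter
          (fun b => ∃ k, (N : ℤ) < (n + 1 : ℕ) * |b k|),
          (∑ x ∈ puncturedIcc N, |(x : ℝ)|⁻¹) * ∏ i, ((b i : ℝ) ^ 2)⁻¹ :=
        sum_le_sum fun b _ => mul_le_mul_of_nonneg_right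
          (sum_le_sum_of_subset_of_nonneg (filter_subset _ _) fun x _ _ => by positivity)
          (prod_nonneg fun i _ => by positivity)
    _ ≤ _ := by
        rw [← mul_sum]
        refine mul_le_mul (sum_puncturedIcc_inv_abs_le N) (htails.trans ?_)
          (sum_nonneg fun b _ => prod_nonneg fun i _ => by positivity) (by positivity)
        gcongr
        · exact (sum_puncturedIcc_inv_sq_of_lt_mul_abs_le (n + 1) N).trans_eq (by push_cast; rfl)
        · exact sum_puncturedIcc_inv_sq_pow_le n N

lemma sum_sum_inv_abs_mul_prod_inv_sq_le (n N : ℕ) :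
    ∑ b ∈ Fintype.piFinset (fun _ : Fin n => puncturedIcc N),
      ∑ x ∈ (puncturedIcc N).filter (fun x => (N : ℤ) < |x + ∑ i, b i|),
        |(x : ℝ)|⁻¹ * ∏ i, ((b i : ℝ) ^ 2)⁻¹
      ≤ 6 * (n + 1) ^ 3 * 4 ^ n * (1 + Real.log N) / N := by
  simp_rw [← sum_mul]
  rw [← sum_filter_not_add_sum_filter _ (fun b => ∃ k, (N : ℤ) < (n + 1 : ℕ) * |b k|)]
  calc _ ≤ (n + 1) / N * (n * (2 * (1 + Real.log N) * 4 ^ n))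
          + 2 * (1 + Real.log N) * (n * (2 * (n + 1) ^ 2 / N * 4 ^ n)) :=
        add_le_add (sum_head_mul_prod_of_small_tail_le n N)
          (sum_head_mul_prod_of_large_tail_le n N)
    _ = (n * (2 * n + 3)) * (n + 1) * (2 * (1 + Real.log N) * 4 ^ n / N) := by ring
    _ ≤ (3 * (n + 1) ^ 2) * (n + 1) * (2 * (1 + Real.log N) * 4 ^ n / N) := by
        gcongr ?_ * _ * _; nlinarith
    _ = _ := by ring

/-- For every `m ≥ 2` there is `C > 0` such that for every
`N ≥ 2`, the sum over `m`-tuples of nonzero integers `(j_1,…,j_m)` with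
`0 < |j_k| ≤ N` and `|j_1 + ⋯ + j_m| > N` of `1/(|j_1| ∏_{k=2}^m |j_k|²)` is
at most `C (ln N)/N`. -/
theorem sum_inv_abs_mul_prod_sq_le (m : ℕ) (hm : 2 ≤ m) :
    ∃ C : ℝ, 0 < C ∧ ∀ N : ℕ, 2 ≤ N →
      ∑ j ∈ (Fintype.piFinset (fun _ : Fin m => Finset.Icc (-(N : ℤ)) N)).filter
          (fun j => (∀ k, j k ≠ 0) ∧ |∑ k, j k| > (N : ℤ)),
        1 / (|(j ⟨0, by omega⟩ : ℝ)| *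
          ∏ k ∈ Finset.univ.filter (fun k : Fin m => 1 ≤ (k : ℕ)), ((j k : ℝ)) ^ 2)
      ≤ C * Real.log N / N := by
  obtain ⟨n, rfl⟩ : ∃ n, m = n + 1 := ⟨m - 1, by omega⟩
  refine ⟨18 * (n + 1) ^ 3 * 4 ^ n, by positivity, fun N hN => ?_⟩
  have hlog : 1 + Real.log N ≤ 3 * Real.log N := by
    have := Real.log_le_log (by norm_num) (show (2 : ℝ) ≤ N by exact_mod_cast hN)
    linarith [Real.log_two_gt_d9]
  rw [sum_filter_piFinset_eq_sum_tail_sum_head]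
  calc _ ≤ 6 * (n + 1) ^ 3 * 4 ^ n * (1 + Real.log N) / N :=
        sum_sum_inv_abs_mul_prod_inv_sq_le n N
    _ ≤ 6 * (n + 1) ^ 3 * 4 ^ n * (3 * Real.log N) / N := by gcongr
    _ = _ := by ring
end

section
/- There exists a constant C > 0 such that for every integer N ≥ 1, ∑_{0<|j|≤N} √( ∑_{0<|l|≤N, |j+l|>N} 1/(j²·l²) ) ≤ C/√N, where j and l range over nonzero integers. -/
/-!
For `1 ≤ j ≤ N` the admissible `l` are exactly `N + 1 - j ≤ l ≤ N`. Writing `a = j`,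
`b = N + 1 - j` (so `a + b = N + 1`), the telescoping bound `1/l² ≤ 2/l - 2/(l+1)` gives an
inner sum of at most `2 / (a b (a + b))`, whose square root is at most
`2/(N+1) · (a^{-1/2} + b^{-1/2})` because `(a^{-1/2} + b^{-1/2})² ≥ 1/a + 1/b = (a+b)/(ab)`.
Summing over `j` with `∑_{k ≤ N} k^{-1/2} ≤ 2√N` bounds the positive `j` by `8/√N`, and the
summand is even in `j`.
-/

open Finset

theorem sum_Icc_inv_sqrt_le (n : ℕ) : ∑ k ∈ Icc (1 : ℤ) n, (√(k : ℝ))⁻¹ ≤ 2 * √n := by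
  induction n with
  | zero => simp
  | succ n ih =>
    have hinsert : Icc (1 : ℤ) ((n : ℤ) + 1) = insert ((n : ℤ) + 1) (Icc 1 (n : ℤ)) := by
      ext; simp only [mem_insert, mem_Icc]; omega
    have hstep : (√((n : ℝ) + 1))⁻¹ ≤ 2 * √((n : ℝ) + 1) - 2 * √n := by
      have hpos : 0 < √((n : ℝ) + 1) := by positivity
      rw [inv_le_iff_one_le_mul₀ hpos]
      nlinarith [sq_nonneg (√((n : ℝ) + 1) - √n), Real.sq_sqrt (n.cast_nonneg : (0 : ℝ) ≤ n),
        Real.sq_sqrt (by positivity : (0 : ℝ) ≤ n + 1)]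
    push_cast
    rw [hinsert, sum_insert (by simp)]
    push_cast
    linarith

theorem sum_Icc_inv_sq_le {m n : ℤ} (hm : 1 ≤ m) (hmn : m - 1 ≤ n) :
    ∑ l ∈ Icc m n, ((l : ℝ) ^ 2)⁻¹ ≤ 2 / m - 2 / (n + 1) := by
  induction n, hmn using Int.leInduction with
  | base => simp
  | succ n hmn ih =>
    have hinsert : Icc m (n + 1) = insert (n + 1) (Icc m n) := by
      ext; simp only [mem_insert, mem_Icc]; omega
    have hn : (0 : ℝ) ≤ n := by exact_mod_cast (by omega : (0 : ℤ) ≤ n)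
    -- `1 / l² ≤ 2 / (l (l + 1)) = 2 / l - 2 / (l + 1)`
    have hstep : (((n : ℝ) + 1) ^ 2)⁻¹ ≤ 2 / ((n : ℝ) + 1) - 2 / ((n : ℝ) + 1 + 1) := by
      rw [div_sub_div _ _ (by positivity) (by positivity), inv_le_iff_one_le_mul₀ (by positivity)]
      field_simp
      linarith
    rw [hinsert, sum_insert (by simp)]
    push_cast
    linarith

theorem sqrt_two_div_mul_mul_add_le {a b : ℝ} (ha : 0 < a) (hb : 0 < b) :
    √(2 / (a * b * (a + b))) ≤ 2 / (a + b) * ((√a)⁻¹ + (√b)⁻¹) := by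
  rw [Real.sqrt_le_left (by positivity), mul_pow, add_sq, inv_pow, inv_pow,
    Real.sq_sqrt ha.le, Real.sq_sqrt hb.le]
  have hcross : 0 ≤ 2 * (√a)⁻¹ * (√b)⁻¹ := by positivity
  calc 2 / (a * b * (a + b)) ≤ (2 / (a + b)) ^ 2 * (a⁻¹ + b⁻¹) := by
        rw [div_pow, inv_add_inv ha.ne' hb.ne']
        field_simp
        nlinarith
    _ ≤ _ := by gcongr; linarith

theorem Function.Even.sum_Icc_filter_ne_zero {M : Type*} [AddCommMonoid M] {f : ℤ → M}
    (hf : f.Even) (N : ℕ) :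
    ∑ j ∈ (Icc (-(N : ℤ)) N).filter (· ≠ 0), f j = 2 • ∑ j ∈ Icc (1 : ℤ) N, f j := by
  have hsplit : (Icc (-(N : ℤ)) N).filter (· ≠ 0) = Icc (-(N : ℤ)) (-1) ∪ Icc 1 N := by
    ext; simp only [mem_filter, mem_Icc, mem_union]; omega
  have hdisj : Disjoint (Icc (-(N : ℤ)) (-1)) (Icc 1 N) :=
    disjoint_left.2 fun _ h₁ h₂ => by rw [mem_Icc] at h₁ h₂; omega
  rw [hsplit, sum_union hdisj, two_nsmul]
  congr 1
  exact sum_equiv (Equiv.neg ℤ) (fun _ => by simp only [mem_Icc, Equiv.neg_apply]; omega)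
    fun j _ => (hf j).symm

noncomputable def overflowSum (N : ℕ) (j : ℤ) : ℝ :=
  ∑ l ∈ (Icc (-(N : ℤ)) N).filter (fun l => l ≠ 0 ∧ |j + l| > (N : ℤ)),
    1 / ((j : ℝ) ^ 2 * (l : ℝ) ^ 2)

theorem overflowSum_even (N : ℕ) : (overflowSum N).Even := fun j => by
  refine sum_equiv (Equiv.neg ℤ) (fun l => ?_) fun l _ => by simp
  simp only [mem_filter, mem_Icc, Equiv.neg_apply]
  rw [show j + -l = -(-j + l) by ring, abs_neg]
  omega

theorem filter_overflow_eq_Icc {N : ℕ} {j : ℤ} (hj : 1 ≤ j) (hjN : j ≤ N) :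
    (Icc (-(N : ℤ)) N).filter (fun l => l ≠ 0 ∧ |j + l| > (N : ℤ)) = Icc ((N : ℤ) + 1 - j) N := by
  ext l
  simp only [mem_filter, mem_Icc, gt_iff_lt, lt_abs]
  omega

theorem overflowSum_le {N : ℕ} {j : ℤ} (hj : 1 ≤ j) (hjN : j ≤ N) :
    overflowSum N j ≤ 2 / (j * (N + 1 - j) * (N + 1)) := by
  have ha : (j : ℝ) ≠ 0 := by exact_mod_cast (by omega : j ≠ 0)
  have hb : (N : ℝ) + 1 - j ≠ 0 := by exact_mod_cast (by omega : (N : ℤ) + 1 - j ≠ 0)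
  rw [overflowSum, filter_overflow_eq_Icc hj hjN]
  simp_rw [one_div, mul_inv, ← mul_sum]
  have htail : ∑ l ∈ Icc ((N : ℤ) + 1 - j) N, ((l : ℝ) ^ 2)⁻¹ ≤
      2 / ((N : ℝ) + 1 - j) - 2 / (N + 1) := by
    simpa using sum_Icc_inv_sq_le (m := (N : ℤ) + 1 - j) (n := N) (by omega) (by omega)
  calc _ ≤ ((j : ℝ) ^ 2)⁻¹ * (2 / ((N : ℝ) + 1 - j) - 2 / (N + 1)) := by gcongr
    _ = _ := by field_simp; ring

theorem sqrt_overflowSum_le {N : ℕ} {j : ℤ} (hj : 1 ≤ j) (hjN : j ≤ N) :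
    √(overflowSum N j) ≤ 2 / (N + 1) * ((√(j : ℝ))⁻¹ + (√((N : ℝ) + 1 - j))⁻¹) := by
  have ha : (0 : ℝ) < j := by exact_mod_cast hj
  have hb : (0 : ℝ) < N + 1 - j := by
    have : (j : ℝ) ≤ N := by exact_mod_cast hjN
    linarith
  have h := sqrt_two_div_mul_mul_add_le ha hb
  rw [add_sub_cancel] at h
  exact (Real.sqrt_le_sqrt (overflowSum_le hj hjN)).trans h

theorem sum_Icc_sqrt_overflowSum_le {N : ℕ} (hN : 1 ≤ N) :
    ∑ j ∈ Icc (1 : ℤ) N, √(overflowSum N j) ≤ 8 / √N := by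
  have hreflect :
      ∑ j ∈ Icc (1 : ℤ) N, (√((N : ℝ) + 1 - j))⁻¹ = ∑ j ∈ Icc (1 : ℤ) N, (√(j : ℝ))⁻¹ :=
    sum_equiv (Equiv.subLeft ((N : ℤ) + 1))
      (fun _ => by simp only [mem_Icc, Equiv.subLeft_apply]; omega) fun _ _ => by simp
  calc _ ≤ ∑ j ∈ Icc (1 : ℤ) N, 2 / (N + 1) * ((√(j : ℝ))⁻¹ + (√((N : ℝ) + 1 - j))⁻¹) :=
        sum_le_sum fun j hj => sqrt_overflowSum_le (mem_Icc.1 hj).1 (mem_Icc.1 hj).2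
    _ = 2 / (N + 1) * (2 * ∑ j ∈ Icc (1 : ℤ) N, (√(j : ℝ))⁻¹) := by
        rw [← mul_sum, sum_add_distrib, hreflect, two_mul]
    _ ≤ 2 / (N + 1) * (2 * (2 * √N)) := by gcongr; exact sum_Icc_inv_sqrt_le N
    _ ≤ 8 / √N := by
        rw [le_div_iff₀ (by positivity)]
        field_simp
        nlinarith [Real.mul_self_sqrt (N.cast_nonneg : (0 : ℝ) ≤ N)]

/-- There is `C > 0` such that for every `N ≥ 1`,
`∑_{0<|j|≤N} √(∑_{0<|l|≤N, |j+l|>N} 1/(j² l²)) ≤ C/√N`. -/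
theorem sum_sqrt_inner_sum_le :
    ∃ C : ℝ, 0 < C ∧ ∀ N : ℕ, 1 ≤ N →
      ∑ j ∈ (Finset.Icc (-(N : ℤ)) N).filter (fun j => j ≠ 0),
        Real.sqrt (∑ l ∈ (Finset.Icc (-(N : ℤ)) N).filter
            (fun l => l ≠ 0 ∧ |j + l| > (N : ℤ)),
          1 / ((j : ℝ) ^ 2 * (l : ℝ) ^ 2))
      ≤ C / Real.sqrt N := by
  refine ⟨16, by norm_num, fun N hN => ?_⟩
  calc _ = 2 • ∑ j ∈ Icc (1 : ℤ) N, √(overflowSum N j) :=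
        Function.Even.sum_Icc_filter_ne_zero (f := fun j => √(overflowSum N j))
          ((overflowSum_even N).left_comp _) N
    _ ≤ 2 • (8 / √N) := nsmul_le_nsmul_right (sum_Icc_sqrt_overflowSum_le hN) 2
    _ = 16 / √N := by rw [two_nsmul]; ring
end

section
/- There exists a constant C > 0 such that for every integer N ≥ 2, the sum over pairs of nonzero integers j, l with 0 < |j| ≤ N, 0 < |l| ≤ N and |j + l| > N of |j|/l² is at most C·N·ln N. -/
/-!
For fixed `l ≠ 0`, the constraint `|j + l| > N` forces `|j| > N - |l|`, which leaves at most
`2|l|` admissible `j`, each contributing at most `N / l²`. The inner sum over `j` is therefore at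
most `2N / |l|`, and summing over `0 < |l| ≤ N` gives `4 N H_N ≤ 4 N (1 + ln N) ≤ 12 N ln N`.
-/

open Finset

lemma card_filter_sub_lt_abs_le (N : ℤ) (m : ℕ) :
    ((Icc (-N) N).filter (fun j => N - m < |j|)).card ≤ 2 * m := by
  have hsub : (Icc (-N) N).filter (fun j => N - m < |j|) ⊆
      Icc (-N) (m - N - 1) ∪ Icc (N - m + 1) N := by
    intro j hj
    simp only [mem_filter, mem_Icc, mem_union] at hj ⊢
    rcases abs_cases j with ⟨h, -⟩ | ⟨h, -⟩ <;> omega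
  calc _ ≤ (Icc (-N) (m - N - 1)).card + (Icc (N - m + 1) N).card :=
        (card_le_card hsub).trans (card_union_le _ _)
    _ = 2 * m := by rw [Int.card_Icc, Int.card_Icc]; omega

lemma sum_abs_div_sq_filter_lt_abs_add_le (N : ℕ) (l : ℤ) :
    ∑ j ∈ (Icc (-(N : ℤ)) N).filter (fun j => (N : ℤ) < |j + l|), |(j : ℝ)| / (l : ℝ) ^ 2
      ≤ 2 * N / |(l : ℝ)| := by
  rcases eq_or_ne l 0 with rfl | hl
  · simp
  set J := (Icc (-(N : ℤ)) N).filter (fun j => (N : ℤ) - l.natAbs < |j|)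
  have hsub : (Icc (-(N : ℤ)) N).filter (fun j => (N : ℤ) < |j + l|) ⊆ J := by
    intro j hj
    simp only [J, mem_filter, Int.natCast_natAbs] at hj ⊢
    exact ⟨hj.1, by linarith [abs_add_le j l]⟩
  have hterm : ∀ j ∈ J, |(j : ℝ)| / (l : ℝ) ^ 2 ≤ N / (l : ℝ) ^ 2 := by
    intro j hj
    gcongr
    exact_mod_cast abs_le.2 (mem_Icc.1 (mem_filter.1 hj).1)
  have hcard : (J.card : ℝ) ≤ 2 * |(l : ℝ)| :=
    have hJ : J.card ≤ 2 * l.natAbs := card_filter_sub_lt_abs_le N l.natAbs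
    calc (J.card : ℝ) ≤ ((2 * l.natAbs : ℕ) : ℝ) := by exact_mod_cast hJ
      _ = 2 * |(l : ℝ)| := by push_cast [Nat.cast_natAbs]; rfl
  have habs : |(l : ℝ)| ≠ 0 := by simpa using hl
  calc _ ≤ ∑ j ∈ J, (N : ℝ) / (l : ℝ) ^ 2 :=
        (sum_le_sum_of_subset_of_nonneg hsub fun _ _ _ => by positivity).trans (sum_le_sum hterm)
    _ ≤ 2 * |(l : ℝ)| * (N / (l : ℝ) ^ 2) := by rw [sum_const, nsmul_eq_mul]; gcongr
    _ = 2 * N / |(l : ℝ)| := by rw [← sq_abs]; field_simp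

-- The `l = 0` term is the junk value `|0|⁻¹ = 0`.
lemma sum_Icc_inv_abs_eq_two_mul_harmonic (N : ℕ) :
    ∑ l ∈ Icc (-(N : ℤ)) N, |(l : ℝ)|⁻¹ = 2 * harmonic N := by
  induction N with
  | zero => simp
  | succ n ih =>
    have hIcc : Icc (-((n + 1 : ℕ) : ℤ)) (n + 1 : ℕ) =
        insert (-(n + 1 : ℤ)) (insert (n + 1 : ℤ) (Icc (-(n : ℤ)) n)) := by
      ext x; simp only [mem_Icc, mem_insert]; omega
    rw [hIcc, sum_insert (by simp; omega), sum_insert (by simp), ih]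
    push_cast [harmonic_succ]
    rw [abs_neg, abs_of_pos (by positivity)]
    ring

/-- There is `C > 0` such that for every `N ≥ 2`,
`∑_{0<|j|,|l|≤N, |j+l|>N} |j|/l² ≤ C N ln N`. -/
theorem sum_abs_div_sq_le :
    ∃ C : ℝ, 0 < C ∧ ∀ N : ℕ, 2 ≤ N →
      ∑ q ∈ ((Finset.Icc (-(N : ℤ)) N ×ˢ Finset.Icc (-(N : ℤ)) N).filter
          (fun q => q.1 ≠ 0 ∧ q.2 ≠ 0 ∧ |q.1 + q.2| > (N : ℤ))),
        |(q.1 : ℝ)| / (q.2 : ℝ) ^ 2 ≤ C * N * Real.log N := by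
  refine ⟨12, by norm_num, fun N hN => ?_⟩
  set I := Icc (-(N : ℤ)) N
  have hlog : (1 : ℝ) / 2 ≤ Real.log N := by
    have := Real.log_le_log two_pos (show (2 : ℝ) ≤ N by exact_mod_cast hN)
    linarith [Real.log_two_gt_d9]
  calc _ ≤ ∑ q ∈ (I ×ˢ I).filter (fun q => (N : ℤ) < |q.1 + q.2|),
          |(q.1 : ℝ)| / (q.2 : ℝ) ^ 2 :=
        sum_le_sum_of_subset_of_nonneg
          (fun q hq => by simp only [mem_filter] at hq ⊢; exact ⟨hq.1, hq.2.2.2⟩)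
          (fun _ _ _ => by positivity)
    _ = ∑ l ∈ I, ∑ j ∈ I.filter (fun j => (N : ℤ) < |j + l|), |(j : ℝ)| / (l : ℝ) ^ 2 := by
        rw [sum_filter, sum_product_right]; simp_rw [sum_filter]
    _ ≤ ∑ l ∈ I, 2 * N * |(l : ℝ)|⁻¹ := sum_le_sum fun l _ =>
        (sum_abs_div_sq_filter_lt_abs_add_le N l).trans_eq (div_eq_mul_inv _ _)
    _ = 4 * N * harmonic N := by rw [← mul_sum, sum_Icc_inv_abs_eq_two_mul_harmonic]; ring
    _ ≤ 4 * N * (1 + Real.log N) := by gcongr; exact harmonic_le_one_add_log N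
    _ ≤ 12 * N * Real.log N := by nlinarith [(Nat.cast_nonneg N : (0 : ℝ) ≤ N)]
end

section
/- For every integer m ≥ 3 there exists a constant C > 0 such that for every integer N ≥ 1 and every integer J with 1 ≤ J ≤ N, the sum over (m−1)-tuples of positive integers (j_1,…,j_{m−1}) with j_k ≤ N for all k and j_1 + ⋯ + j_{m−1} = J of 1/(j_1 · j_2 · ∏_{k=3}^{m−1} j_k²) is at most C. (For m = 3 the product ∏_{k=3}^{m−1} j_k² is the empty product, equal to 1.) -/
/-!
By AM-GM, `1 / (j₁ j₂) ≤ (1 / j₁² + 1 / j₂²) / 2`, so the summand is at most the average of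
`∏_{k ≠ 2} 1 / j_k²` and `∏_{k ≠ 1} 1 / j_k²`. A tuple with prescribed total `J` is determined by
all coordinates but one, so summing `∏_{k ≠ i} 1 / j_k²` over such tuples gives at most
`∏_{k ≠ i} ∑_{a ≥ 1} 1 / a² ≤ 2 ^ (m - 2)`.
-/

open Finset Fintype

section Fiber

variable {ι M R : Type*} [Fintype ι] [DecidableEq ι] [AddCancelCommMonoid M] [DecidableEq M]
  [CommSemiring R] [PartialOrder R] [IsOrderedRing R]

theorem injOn_restrict_ne_filter_sum_eq (t : ι → Finset M) (J : M) (i : ι) :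
    Set.InjOn (fun (j : ι → M) (k : {k // k ≠ i}) => j k)
      ((piFinset t).filter (fun j => ∑ k, j k = J)) := by
  intro a ha b hb hab
  have hne : ∀ k, k ≠ i → a k = b k := fun k hk => congrFun hab ⟨k, hk⟩
  have hsa := (mem_filter.mp ha).2
  have hsb := (mem_filter.mp hb).2
  rw [← add_sum_erase _ _ (mem_univ i)] at hsa hsb
  rw [sum_congr rfl fun k hk => hne k (ne_of_mem_erase hk)] at hsa
  funext k
  by_cases hk : k = i
  · subst hk; exact add_right_cancel (hsa.trans hsb.symm)
  · exact hne k hk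

theorem sum_filter_sum_eq_prod_erase_le (t : ι → Finset M) (J : M) (i : ι) {f : ι → M → R}
    (hf : ∀ k a, 0 ≤ f k a) :
    ∑ j ∈ (piFinset t).filter (fun j => ∑ k, j k = J), ∏ k ∈ univ.erase i, f k (j k)
      ≤ ∏ k ∈ univ.erase i, ∑ a ∈ t k, f k a := by
  set F := (piFinset t).filter (fun j => ∑ k, j k = J)
  set π := fun (j : ι → M) (k : {k // k ≠ i}) => j k
  have hprod : ∀ g : ι → R, ∏ k ∈ univ.erase i, g k = ∏ k : {k // k ≠ i}, g k :=
    fun g => prod_subtype _ (fun k => by simp) g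
  have hmaps : F.image π ⊆ piFinset (fun k : {k // k ≠ i} => t k) := by
    simp only [subset_iff, mem_image, mem_piFinset]
    rintro _ ⟨j, hj, rfl⟩ k
    exact mem_piFinset.mp (mem_filter.mp hj).1 k
  calc ∑ j ∈ F, ∏ k ∈ univ.erase i, f k (j k)
      = ∑ x ∈ F.image π, ∏ k, f k.1 (x k) := by
        rw [sum_image (injOn_restrict_ne_filter_sum_eq t J i)]
        exact sum_congr rfl fun j _ => hprod _
    _ ≤ ∑ x ∈ piFinset (fun k : {k // k ≠ i} => t k), ∏ k, f k.1 (x k) :=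
        sum_le_sum_of_subset_of_nonneg hmaps fun x _ _ => prod_nonneg fun k _ => hf _ _
    _ = ∏ k ∈ univ.erase i, ∑ a ∈ t k, f k a := by
        rw [← prod_univ_sum, hprod]

end Fiber

theorem sum_Icc_inv_sq_le_two (N : ℕ) : ∑ a ∈ Icc 1 N, ((a : ℝ) ^ 2)⁻¹ ≤ 2 := by
  have hIcc : Icc 1 N = Ioo 0 (N + 1) := by ext; simp; omega
  simpa [hIcc] using sum_Ioo_inv_sq_le (α := ℝ) 0 (N + 1)

theorem inv_mul_le_inv_sq_add_inv_sq_div_two {K : Type*} [Field K] [LinearOrder K]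
    [IsStrictOrderedRing K] (x y : K) : (x * y)⁻¹ ≤ ((x ^ 2)⁻¹ + (y ^ 2)⁻¹) / 2 := by
  have := two_mul_le_add_sq x⁻¹ y⁻¹
  rw [mul_inv, ← inv_pow, ← inv_pow]
  linarith

/-- For every `m ≥ 3` there is `C > 0` such that for every
`N ≥ 1` and every `1 ≤ J ≤ N`, the sum over `(m-1)`-tuples of positive
integers `(j_1,…,j_{m-1})` with `j_k ≤ N` and `j_1 + ⋯ + j_{m-1} = J` of
`1/(j_1 j_2 ∏_{k=3}^{m-1} j_k²)` is at most `C`. -/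
theorem sum_fixed_total_le (m : ℕ) (hm : 3 ≤ m) :
    ∃ C : ℝ, 0 < C ∧ ∀ N J : ℕ, 1 ≤ J → J ≤ N →
      ∑ j ∈ (Fintype.piFinset (fun _ : Fin (m - 1) => Finset.Icc 1 N)).filter
          (fun j => ∑ k, j k = J),
        1 / ((j ⟨0, by omega⟩ : ℝ) * (j ⟨1, by omega⟩ : ℝ) *
          ∏ k ∈ Finset.univ.filter (fun k : Fin (m - 1) => 2 ≤ (k : ℕ)), ((j k : ℝ)) ^ 2)
      ≤ C := by
  set i₀ : Fin (m - 1) := ⟨0, by omega⟩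
  set i₁ : Fin (m - 1) := ⟨1, by omega⟩
  set S := univ.filter (fun k : Fin (m - 1) => 2 ≤ (k : ℕ))
  have erase_i₀ : univ.erase i₀ = insert i₁ S := by ext k; simp [i₀, i₁, S, Fin.ext_iff]; omega
  have erase_i₁ : univ.erase i₁ = insert i₀ S := by ext k; simp [i₀, i₁, S, Fin.ext_iff]; omega
  have card_erase (i : Fin (m - 1)) : #(univ.erase i) = m - 2 := by simp; omega
  refine ⟨2 ^ (m - 2), by positivity, fun N J _ _ => ?_⟩
  set w : Fin (m - 1) → ℕ → ℝ := fun _ a => ((a : ℝ) ^ 2)⁻¹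
  have fiber_le (i : Fin (m - 1)) :
      ∑ j ∈ (piFinset fun _ => Icc 1 N).filter (fun j => ∑ k, j k = J),
        ∏ k ∈ univ.erase i, w k (j k) ≤ 2 ^ (m - 2) := by
    grw [sum_filter_sum_eq_prod_erase_le _ J i fun _ _ => by positivity,
      prod_le_prod (fun _ _ => Finset.sum_nonneg fun _ _ => by positivity)
        fun _ _ => sum_Icc_inv_sq_le_two N]
    rw [prod_const, card_erase]
  have prod_erase {a b : Fin (m - 1)} (hab : univ.erase a = insert b S) (hb : b ∉ S)
      (j : Fin (m - 1) → ℕ) :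
      ∏ k ∈ univ.erase a, w k (j k) = ((j b : ℝ) ^ 2)⁻¹ * (∏ k ∈ S, (j k : ℝ) ^ 2)⁻¹ := by
    rw [hab, prod_insert hb, prod_inv_distrib]
  calc _ ≤ ∑ j ∈ (piFinset fun _ => Icc 1 N).filter (fun j => ∑ k, j k = J),
        (∏ k ∈ univ.erase i₁, w k (j k) + ∏ k ∈ univ.erase i₀, w k (j k)) / 2 := by
        refine sum_le_sum fun j _ => ?_
        rw [prod_erase erase_i₀ (by simp [S, i₁]), prod_erase erase_i₁ (by simp [S, i₀]), one_div,
          mul_inv, ← add_mul, mul_div_right_comm]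
        gcongr
        exact inv_mul_le_inv_sq_add_inv_sq_div_two _ _
    _ ≤ (2 ^ (m - 2) + 2 ^ (m - 2)) / 2 := by
        rw [← sum_div, sum_add_distrib]
        grw [fiber_le, fiber_le]
    _ = 2 ^ (m - 2) := by ring
end
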